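/- arXiv:2508.16531 — 6 statements merged into one kernel-verified Lean document; each statement's English description precedes it below -/
import Mathlib

section
/- Let G be a graph on n vertices, let p ∈ [0,1] and δ > 0. Suppose every vertex of G has degree in the interval [(n−1)(p−δ), (n−1)(p+δ)], and every pair of distinct vertices of G has a number of common neighbors in the interval [(n−2)(p²−δ), (n−2)(p²+δ)]. Then G is (p, n·√(3δ) + √(n(δ+p)))-jumbled. -/
open scoped Classical

/-- `e(X,Y)`: the number of pairs `(x,y) ∈ X × Y` with `xy ∈ E(G)`. -/
noncomputable def eBetween {n : ℕ} (G : SimpleGraph (Fin n)) (X Y : Finset (Fin n)) : ℕ :=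
  Set.ncard {uv : Fin n × Fin n | uv.1 ∈ X ∧ uv.2 ∈ Y ∧ G.Adj uv.1 uv.2}

/-- `G` is `(p,β)`-jumbled. -/
def IsJumbled {n : ℕ} (G : SimpleGraph (Fin n)) (p β : ℝ) : Prop :=
  ∀ X Y : Finset (Fin n),
    |(eBetween G X Y : ℝ) - p * X.card * Y.card| ≤ β * Real.sqrt (X.card * Y.card)

private lemma deg_sum' {n : ℕ} (G : SimpleGraph (Fin n)) (v : Fin n) :
    ((G.neighborSet v).ncard : ℝ) = ∑ x : Fin n, if G.Adj x v then (1:ℝ) else 0 := by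
  have h : G.neighborSet v = ↑(Finset.univ.filter (fun w => G.Adj w v)) := by
    ext w; simp [SimpleGraph.mem_neighborSet, G.adj_comm]
  rw [h, Set.ncard_coe_finset, Finset.card_filter]
  push_cast
  exact Finset.sum_congr rfl (fun x _ => by split <;> simp)

private lemma codeg_sum' {n : ℕ} (G : SimpleGraph (Fin n)) (u v : Fin n) :
    ((G.neighborSet u ∩ G.neighborSet v).ncard : ℝ)
      = ∑ x : Fin n, (if G.Adj x u then (1:ℝ) else 0) * (if G.Adj x v then (1:ℝ) else 0) := by
  have h : G.neighborSet u ∩ G.neighborSet v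
      = ↑(Finset.univ.filter (fun w => G.Adj w u ∧ G.Adj w v)) := by
    ext w; simp [SimpleGraph.mem_neighborSet, G.adj_comm]
  rw [h, Set.ncard_coe_finset, Finset.card_filter]
  push_cast
  refine Finset.sum_congr rfl (fun x _ => ?_)
  by_cases h1 : G.Adj x u <;> by_cases h2 : G.Adj x v <;> simp [h1, h2]

set_option maxHeartbeats 1000000 in
theorem jumbled_of_deg_codeg {n : ℕ} (G : SimpleGraph (Fin n)) (p δ : ℝ)
    (hp : p ∈ Set.Icc (0 : ℝ) 1) (hδ : 0 < δ)
    (hdeg : ∀ v : Fin n,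
      ((G.neighborSet v).ncard : ℝ) ∈ Set.Icc (((n : ℝ) - 1) * (p - δ)) (((n : ℝ) - 1) * (p + δ)))
    (hcodeg : ∀ u v : Fin n, u ≠ v →
      (((G.neighborSet u) ∩ (G.neighborSet v)).ncard : ℝ) ∈
        Set.Icc (((n : ℝ) - 2) * (p ^ 2 - δ)) (((n : ℝ) - 2) * (p ^ 2 + δ))) :
    IsJumbled G p ((n : ℝ) * Real.sqrt (3 * δ) + Real.sqrt ((n : ℝ) * (δ + p))) := by
  obtain ⟨hp0, hp1⟩ := hp
  intro X Y
  set β : ℝ := (n : ℝ) * Real.sqrt (3 * δ) + Real.sqrt ((n : ℝ) * (δ + p)) with hβdef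
  have hn0 : (0:ℝ) ≤ n := Nat.cast_nonneg n
  have hβ0 : 0 ≤ β := by positivity
  rcases Finset.eq_empty_or_nonempty Y with hY | hY
  · subst hY
    have he : eBetween G X (∅ : Finset (Fin n)) = 0 := by
      simp [eBetween]
    simp [he]
  rcases Finset.eq_empty_or_nonempty X with hX | hX
  · subst hX
    have he : eBetween G (∅ : Finset (Fin n)) Y = 0 := by
      simp [eBetween]
    simp [he]
  -- main case
  set k : ℝ := (X.card : ℝ) with hkdef
  set m : ℝ := (Y.card : ℝ) with hmdef
  have hk0 : 0 ≤ k := by positivity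
  have hm1 : 1 ≤ m := by
    rw [hmdef]; exact_mod_cast Finset.card_pos.2 hY
  have hm0 : 0 ≤ m := by linarith
  have hmn : m ≤ n := by
    rw [hmdef]
    exact_mod_cast (Finset.card_le_univ Y).trans_eq (by simp)
  have hn1 : (1:ℝ) ≤ n := le_trans hm1 hmn
  set a : Fin n → ℝ := fun x => ∑ y ∈ Y, if G.Adj x y then (1:ℝ) else 0 with hadef
  have he : (eBetween G X Y : ℝ) = ∑ x ∈ X, a x := by
    have hset : {uv : Fin n × Fin n | uv.1 ∈ X ∧ uv.2 ∈ Y ∧ G.Adj uv.1 uv.2}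
        = ↑((X ×ˢ Y).filter (fun uv => G.Adj uv.1 uv.2)) := by
      ext ⟨u, v⟩
      simp [Finset.mem_product, and_assoc]
    rw [eBetween, hset, Set.ncard_coe_finset, Finset.card_filter, Finset.sum_product]
    push_cast
    exact Finset.sum_congr rfl fun x _ => Finset.sum_congr rfl fun y _ => by split <;> simp
  have h1 : ∑ x : Fin n, a x = ∑ y ∈ Y, ((G.neighborSet y).ncard : ℝ) := by
    rw [Finset.sum_comm]
    exact Finset.sum_congr rfl fun y _ => (deg_sum' G y).symm
  have h2 : ∑ x : Fin n, (a x) ^ 2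
      = ∑ y ∈ Y, ∑ z ∈ Y, ((G.neighborSet y ∩ G.neighborSet z).ncard : ℝ) := by
    have hx : ∀ x : Fin n, (a x) ^ 2 = ∑ y ∈ Y, ∑ z ∈ Y,
        (if G.Adj x y then (1:ℝ) else 0) * (if G.Adj x z then (1:ℝ) else 0) := fun x => by
      rw [hadef, sq, Finset.sum_mul_sum]
    simp_rw [hx]
    rw [Finset.sum_comm]
    refine Finset.sum_congr rfl fun y _ => ?_
    rw [Finset.sum_comm]
    exact Finset.sum_congr rfl fun z _ => (codeg_sum' G y z).symm
  -- degree sum bounds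
  have hA_lb : m * (((n:ℝ) - 1) * (p - δ)) ≤ ∑ x : Fin n, a x := by
    rw [h1]
    calc m * (((n:ℝ) - 1) * (p - δ)) = ∑ _y ∈ Y, ((n:ℝ) - 1) * (p - δ) := by
          rw [Finset.sum_const, nsmul_eq_mul, hmdef]
      _ ≤ ∑ y ∈ Y, ((G.neighborSet y).ncard : ℝ) :=
          Finset.sum_le_sum fun y _ => (hdeg y).1
  -- second moment bound
  have hB : ∑ x : Fin n, (a x) ^ 2
      ≤ m * ((((n:ℝ) - 1) * (p + δ)) + (m - 1) * (((n:ℝ) - 2) * (p ^ 2 + δ))) := by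
    rw [h2]
    have hbound : ∀ y ∈ Y, ∑ z ∈ Y, ((G.neighborSet y ∩ G.neighborSet z).ncard : ℝ)
        ≤ (((n:ℝ) - 1) * (p + δ)) + (m - 1) * (((n:ℝ) - 2) * (p ^ 2 + δ)) := by
      intro y hy
      rw [← Finset.add_sum_erase _ _ hy]
      have hdiag : ((G.neighborSet y ∩ G.neighborSet y).ncard : ℝ) ≤ ((n:ℝ) - 1) * (p + δ) := by
        rw [Set.inter_self]; exact (hdeg y).2
      have hoff : ∑ z ∈ Y.erase y, ((G.neighborSet y ∩ G.neighborSet z).ncard : ℝ)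
          ≤ (m - 1) * (((n:ℝ) - 2) * (p ^ 2 + δ)) := by
        calc ∑ z ∈ Y.erase y, ((G.neighborSet y ∩ G.neighborSet z).ncard : ℝ)
            ≤ ∑ _z ∈ Y.erase y, ((n:ℝ) - 2) * (p ^ 2 + δ) :=
              Finset.sum_le_sum fun z hz =>
                (hcodeg y z (Ne.symm (Finset.ne_of_mem_erase hz))).2
          _ = ((Y.erase y).card : ℝ) * (((n:ℝ) - 2) * (p ^ 2 + δ)) := by
              rw [Finset.sum_const, nsmul_eq_mul]
          _ = (m - 1) * (((n:ℝ) - 2) * (p ^ 2 + δ)) := by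
              rw [Finset.card_erase_of_mem hy, Nat.cast_sub (Finset.card_pos.2 hY)]
              norm_num [hmdef]
      linarith
    calc ∑ y ∈ Y, ∑ z ∈ Y, ((G.neighborSet y ∩ G.neighborSet z).ncard : ℝ)
        ≤ ∑ _y ∈ Y, ((((n:ℝ) - 1) * (p + δ)) + (m - 1) * (((n:ℝ) - 2) * (p ^ 2 + δ))) :=
          Finset.sum_le_sum hbound
      _ = m * ((((n:ℝ) - 1) * (p + δ)) + (m - 1) * (((n:ℝ) - 2) * (p ^ 2 + δ))) := by
          rw [Finset.sum_const, nsmul_eq_mul, hmdef]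
  -- variance expansion
  set S : ℝ := ∑ x : Fin n, (a x - p * m) ^ 2 with hSdef
  have hSexp : S = (∑ x : Fin n, (a x) ^ 2) - 2 * (p * m) * (∑ x : Fin n, a x)
      + (n:ℝ) * (p * m) ^ 2 := by
    have hx : ∀ x : Fin n, (a x - p * m) ^ 2
        = (a x) ^ 2 - 2 * (p * m) * (a x) + (p * m) ^ 2 := fun x => by ring
    rw [hSdef]
    simp_rw [hx]
    rw [Finset.sum_add_distrib, Finset.sum_sub_distrib, ← Finset.mul_sum, Finset.sum_const,
      Finset.card_univ, Fintype.card_fin, nsmul_eq_mul]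
  have hpm0 : 0 ≤ p * m := mul_nonneg hp0 hm0
  have hS_le1 : S ≤ m * ((((n:ℝ) - 1) * (p + δ)) + (m - 1) * (((n:ℝ) - 2) * (p ^ 2 + δ)))
      - 2 * (p * m) * (m * (((n:ℝ) - 1) * (p - δ))) + (n:ℝ) * (p * m) ^ 2 := by
    have h := mul_le_mul_of_nonneg_left hA_lb (by positivity : (0:ℝ) ≤ 2 * (p * m))
    linarith [hSexp, hB]
  set C : ℝ := 3 * δ * (n:ℝ) ^ 2 + (n:ℝ) * δ + (n:ℝ) * p with hCdef
  have hbr1 : 0 ≤ p + p ^ 2 * ((n:ℝ) - 2) := by nlinarith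
  have hbr2 : ((n:ℝ) - 1) + (m - 1) * ((n:ℝ) - 2) + 2 * p * m * ((n:ℝ) - 1)
      ≤ 3 * (n:ℝ) ^ 2 + (n:ℝ) := by
    nlinarith [mul_nonneg (mul_nonneg (sub_nonneg.2 hp1) hm0) (by linarith : (0:ℝ) ≤ (n:ℝ) - 1),
      mul_nonneg hn0 (sub_nonneg.2 hmn)]
  have hS_le : S ≤ C * m := by
    have t1 : 0 ≤ m * (p + p ^ 2 * ((n:ℝ) - 2)) := mul_nonneg hm0 hbr1
    have t2 : 0 ≤ (δ * m) * (3 * (n:ℝ) ^ 2 + (n:ℝ)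
        - (((n:ℝ) - 1) + (m - 1) * ((n:ℝ) - 2) + 2 * p * m * ((n:ℝ) - 1))) :=
      mul_nonneg (mul_nonneg hδ.le hm0) (by linarith)
    rw [hCdef]
    linarith [t1, t2, hS_le1]
  -- Cauchy–Schwarz
  have hCS : (∑ x ∈ X, (a x - p * m)) ^ 2 ≤ k * ∑ x ∈ X, (a x - p * m) ^ 2 := by
    have h := Finset.sum_mul_sq_le_sq_mul_sq X (fun _ => (1:ℝ)) (fun x => a x - p * m)
    simp only [one_mul, one_pow, Finset.sum_const, nsmul_eq_mul, mul_one] at h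
    exact h
  have hsub : ∑ x ∈ X, (a x - p * m) ^ 2 ≤ S :=
    Finset.sum_le_sum_of_subset_of_nonneg (Finset.subset_univ X) fun _ _ _ => sq_nonneg _
  have hEsum : (eBetween G X Y : ℝ) - p * k * m = ∑ x ∈ X, (a x - p * m) := by
    rw [Finset.sum_sub_distrib, Finset.sum_const, nsmul_eq_mul, he, ← hkdef]; ring
  have hβsq : C ≤ β ^ 2 := by
    have h3δ : Real.sqrt (3 * δ) ^ 2 = 3 * δ := Real.sq_sqrt (by positivity)
    have hnp : Real.sqrt ((n:ℝ) * (δ + p)) ^ 2 = (n:ℝ) * (δ + p) :=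
      Real.sq_sqrt (by positivity)
    have hcross : 0 ≤ ((n:ℝ) * Real.sqrt (3 * δ)) * Real.sqrt ((n:ℝ) * (δ + p)) := by positivity
    rw [hβdef, hCdef]
    nlinarith [h3δ, hnp, hcross]
  have hsq : ((eBetween G X Y : ℝ) - p * k * m) ^ 2 ≤ β ^ 2 * (k * m) := by
    calc ((eBetween G X Y : ℝ) - p * k * m) ^ 2 = (∑ x ∈ X, (a x - p * m)) ^ 2 := by
          rw [hEsum]
      _ ≤ k * ∑ x ∈ X, (a x - p * m) ^ 2 := hCS
      _ ≤ k * S := mul_le_mul_of_nonneg_left hsub hk0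
      _ ≤ k * (C * m) := mul_le_mul_of_nonneg_left hS_le hk0
      _ ≤ k * (β ^ 2 * m) :=
          mul_le_mul_of_nonneg_left (mul_le_mul_of_nonneg_right hβsq hm0) hk0
      _ = β ^ 2 * (k * m) := by ring
  have hfin := Real.sqrt_le_sqrt hsq
  rw [Real.sqrt_sq_eq_abs] at hfin
  have hrfl : Real.sqrt (β ^ 2 * (k * m)) = β * Real.sqrt (k * m) := by
    rw [Real.sqrt_mul (sq_nonneg β), Real.sqrt_sq hβ0]
  rw [hrfl] at hfin
  exact hfin
end

section
/- For every integer k ≥ 1 and real C ≥ 1 there exists n₀ such that for all n ≥ n₀ the following holds. Let p ∈ (0,1] satisfy p ≥ (1200·C⁴·log n / n)^{1/(4k−1)}. Then with probability at least 1 − 1/n, G ∼ 𝒢(n,p) is (p, p^k·n/C)-jumbled. -/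
open scoped Classical

/-- Weight of a graph `G` under the Erdős–Rényi distribution `𝒢(n,p)`. -/
noncomputable def erWeight (n : ℕ) (p : ℝ) (G : SimpleGraph (Fin n)) : ℝ :=
  p ^ G.edgeSet.ncard * (1 - p) ^ (n.choose 2 - G.edgeSet.ncard)

/-- Probability of an event under `𝒢(n,p)`. -/
noncomputable def erProb (n : ℕ) (p : ℝ) (A : SimpleGraph (Fin n) → Prop) : ℝ :=
  ∑ G : SimpleGraph (Fin n), if A G then erWeight n p G else 0

namespace ERAux
open Finset Real
variable {n : ℕ}

noncomputable def E0 (n : ℕ) : Finset (Sym2 (Fin n)) := (⊤ : SimpleGraph (Fin n)).edgeFinset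

lemma card_E0 (n : ℕ) : (E0 n).card = n.choose 2 := by
  simpa [E0] using SimpleGraph.card_edgeFinset_top_eq_card_choose_two (V := Fin n)

lemma edgeFinset_subset_E0 (G : SimpleGraph (Fin n)) : G.edgeFinset ⊆ E0 n :=
  SimpleGraph.edgeFinset_mono le_top

lemma not_isDiag_of_mem_E0 {e : Sym2 (Fin n)} (he : e ∈ E0 n) : ¬ e.IsDiag := by
  have := SimpleGraph.mem_edgeFinset.1 he
  rw [SimpleGraph.edgeSet_top] at this
  exact this

lemma erWeight_eq (p : ℝ) (G : SimpleGraph (Fin n)) :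
    erWeight n p G = p ^ G.edgeFinset.card * (1 - p) ^ ((E0 n).card - G.edgeFinset.card) := by
  rw [card_E0, erWeight, ← SimpleGraph.coe_edgeFinset, Set.ncard_coe_finset]

lemma sum_graphs_eq (f : Finset (Sym2 (Fin n)) → ℝ) :
    ∑ G : SimpleGraph (Fin n), f G.edgeFinset = ∑ S ∈ (E0 n).powerset, f S := by
  refine Finset.sum_nbij' (fun G => G.edgeFinset) (fun S => SimpleGraph.fromEdgeSet ↑S)
    ?_ ?_ ?_ ?_ ?_
  · intro G _; exact Finset.mem_powerset.2 (edgeFinset_subset_E0 G)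
  · intro S _; exact Finset.mem_univ _
  · intro G _; simp [SimpleGraph.coe_edgeFinset, SimpleGraph.fromEdgeSet_edgeSet]
  · intro S hS
    have hS' := Finset.mem_powerset.1 hS
    ext e
    simp only [SimpleGraph.mem_edgeFinset, SimpleGraph.edgeSet_fromEdgeSet, Set.mem_diff,
      Finset.mem_coe, Set.mem_setOf_eq]
    exact ⟨fun h => h.1, fun h => ⟨h, not_isDiag_of_mem_E0 (hS' h)⟩⟩
  · intro G _; rfl

lemma sum_weight_mul_prod (p : ℝ) (a b : Sym2 (Fin n) → ℝ) :
    (∑ G : SimpleGraph (Fin n), erWeight n p G *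
        ((∏ e ∈ G.edgeFinset, a e) * ∏ e ∈ (E0 n) \ G.edgeFinset, b e))
      = ∏ e ∈ E0 n, (p * a e + (1 - p) * b e) := by
  have h1 : (∑ G : SimpleGraph (Fin n), erWeight n p G *
        ((∏ e ∈ G.edgeFinset, a e) * ∏ e ∈ (E0 n) \ G.edgeFinset, b e))
      = ∑ G : SimpleGraph (Fin n), (fun S : Finset (Sym2 (Fin n)) =>
          p ^ S.card * (1 - p) ^ ((E0 n).card - S.card) *
            ((∏ e ∈ S, a e) * ∏ e ∈ (E0 n) \ S, b e)) G.edgeFinset := by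
    refine Finset.sum_congr rfl fun G _ => ?_
    rw [erWeight_eq]
  have h2 := sum_graphs_eq (n := n) (fun S : Finset (Sym2 (Fin n)) =>
          p ^ S.card * (1 - p) ^ ((E0 n).card - S.card) *
            ((∏ e ∈ S, a e) * ∏ e ∈ (E0 n) \ S, b e))
  rw [h1, h2, Finset.prod_add]
  refine Finset.sum_congr rfl fun S hS => ?_
  have hS' := Finset.mem_powerset.1 hS
  rw [Finset.prod_mul_distrib, Finset.prod_mul_distrib, Finset.prod_const, Finset.prod_const,
    Finset.card_sdiff_of_subset hS']
  ring

lemma sum_erWeight (p : ℝ) : (∑ G : SimpleGraph (Fin n), erWeight n p G) = 1 := by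
  have := sum_weight_mul_prod (n := n) p (fun _ => 1) (fun _ => 1)
  simpa using this

lemma erWeight_nonneg {p : ℝ} (hp0 : 0 ≤ p) (hp1 : p ≤ 1) (G : SimpleGraph (Fin n)) :
    0 ≤ erWeight n p G := by
  unfold erWeight
  have : (0:ℝ) ≤ 1 - p := by linarith
  positivity

noncomputable def wgt (X Y : Finset (Fin n)) (e : Sym2 (Fin n)) : ℕ :=
  ((X ×ˢ Y).filter (fun uv => Sym2.mk uv.1 uv.2 = e)).card

lemma eBetween_eq_card (G : SimpleGraph (Fin n)) (X Y : Finset (Fin n)) :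
    eBetween G X Y = ((X ×ˢ Y).filter (fun uv => G.Adj uv.1 uv.2)).card := by
  rw [eBetween, ← Set.ncard_coe_finset]
  congr 1
  ext uv
  simp [Finset.mem_filter, Finset.mem_product, and_assoc]

lemma eBetween_eq_sum (G : SimpleGraph (Fin n)) (X Y : Finset (Fin n)) :
    eBetween G X Y = ∑ e ∈ G.edgeFinset, wgt X Y e := by
  rw [eBetween_eq_card]
  rw [Finset.card_eq_sum_card_fiberwise (f := fun uv => Sym2.mk uv.1 uv.2) (t := G.edgeFinset)
    (fun uv huv => by
      simp only [Finset.mem_coe, Finset.mem_filter] at huv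
      exact SimpleGraph.mem_edgeFinset.2 huv.2)]
  refine Finset.sum_congr rfl fun e he => ?_
  unfold wgt
  congr 1
  rw [Finset.filter_filter]
  refine Finset.filter_congr fun uv _ => ?_
  constructor
  · rintro ⟨_, h⟩; exact h
  · rintro h
    refine ⟨?_, h⟩
    have : Sym2.mk uv.1 uv.2 ∈ G.edgeSet := by rw [h]; exact SimpleGraph.mem_edgeFinset.1 he
    exact this

lemma wgt_le_two (X Y : Finset (Fin n)) (e : Sym2 (Fin n)) : wgt X Y e ≤ 2 := by
  induction e using Sym2.inductionOn with
  | hf a b =>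
    unfold wgt
    have hsub : (X ×ˢ Y).filter (fun uv => Sym2.mk uv.1 uv.2 = s(a, b)) ⊆ {(a, b), (b, a)} := by
      intro uv huv
      simp only [Finset.mem_filter] at huv
      have := huv.2
      obtain ⟨u, v⟩ := uv
      rw [Sym2.eq_iff] at this
      rcases this with ⟨h1, h2⟩ | ⟨h1, h2⟩
      · simp [← h1, ← h2]
      · simp [← h1, ← h2]
    calc _ ≤ ({(a, b), (b, a)} : Finset (Fin n × Fin n)).card := Finset.card_le_card hsub
      _ ≤ 2 := Finset.card_insert_le _ _ |>.trans (by simp)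

lemma sum_wgt (X Y : Finset (Fin n)) :
    ∑ e ∈ E0 n, wgt X Y e = ((X ×ˢ Y).filter (fun uv => uv.1 ≠ uv.2)).card := by
  rw [Finset.card_eq_sum_card_fiberwise (f := fun uv => Sym2.mk uv.1 uv.2) (t := E0 n)
    (fun uv huv => by
      simp only [Finset.mem_coe, Finset.mem_filter] at huv
      refine SimpleGraph.mem_edgeFinset.2 ?_
      rw [SimpleGraph.edgeSet_top]
      simpa using huv.2)]
  refine Finset.sum_congr rfl fun e he => ?_
  unfold wgt
  congr 1
  rw [Finset.filter_filter]
  refine (Finset.filter_congr fun uv _ => ?_).symm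
  constructor
  · rintro ⟨_, h⟩; exact h
  · rintro h
    refine ⟨?_, h⟩
    intro hd
    exact not_isDiag_of_mem_E0 he (by rw [← h]; simp [hd, Sym2.mk_isDiag_iff])

lemma card_diag (X Y : Finset (Fin n)) :
    ((X ×ˢ Y).filter (fun uv => uv.1 = uv.2)).card = (X ∩ Y).card := by
  refine Finset.card_bij (fun uv _ => uv.1) ?_ ?_ ?_
  · intro uv huv
    simp only [Finset.mem_filter, Finset.mem_product] at huv
    simp only [Finset.mem_inter]
    exact ⟨huv.1.1, huv.2 ▸ huv.1.2⟩
  · intro uv huv uv' huv' h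
    simp only [Finset.mem_filter] at huv huv'
    have h2 : uv.2 = uv'.2 := by rw [← huv.2, ← huv'.2]; exact h
    exact Prod.ext h h2
  · intro x hx
    simp only [Finset.mem_inter] at hx
    exact ⟨(x, x), by simp [Finset.mem_filter, Finset.mem_product, hx.1, hx.2], rfl⟩

lemma card_offdiag (X Y : Finset (Fin n)) :
    ((X ×ˢ Y).filter (fun uv => uv.1 ≠ uv.2)).card + (X ∩ Y).card = X.card * Y.card := by
  rw [← card_diag X Y, ← Finset.card_product X Y]
  rw [add_comm, Finset.card_filter_add_card_filter_not]

lemma exp_quad_bound {x : ℝ} (hx : |x| ≤ 1) : Real.exp x ≤ 1 + x + (3/4) * x^2 := by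
  have h := Real.exp_bound hx (n := 2) (by norm_num)
  have hsum : ∑ m ∈ Finset.range 2, x ^ m / m.factorial = 1 + x := by
    simp [Finset.sum_range_succ]
  rw [hsum] at h
  have h2 : |x| ^ 2 * (((2:ℕ).succ : ℝ) / (((2:ℕ).factorial : ℝ) * ((2:ℕ):ℝ))) = (3/4) * x^2 := by
    rw [sq_abs]
    norm_num [Nat.factorial]
    ring
  rw [h2] at h
  have := (abs_sub_le_iff.1 h).1
  linarith

lemma two_point_mgf {p x1 x2 u : ℝ} (hp0 : 0 ≤ p) (hp1 : p ≤ 1)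
    (h1 : |x1| ≤ 1) (h2 : |x2| ≤ 1) (hmean : p * x1 + (1 - p) * x2 = 0)
    (hx1 : x1 ^ 2 ≤ u) (hx2 : x2 ^ 2 ≤ u) :
    p * Real.exp x1 + (1 - p) * Real.exp x2 ≤ Real.exp u := by
  have e1 := exp_quad_bound h1
  have e2 := exp_quad_bound h2
  have hu0 : 0 ≤ u := le_trans (sq_nonneg x1) hx1
  have key : p * Real.exp x1 + (1 - p) * Real.exp x2 ≤ 1 + u := by nlinarith
  calc p * Real.exp x1 + (1 - p) * Real.exp x2 ≤ 1 + u := key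
    _ ≤ Real.exp u := by linarith [Real.add_one_le_exp u]

/-- real total weight `m = Σ_e w_e`. -/
noncomputable def mR (X Y : Finset (Fin n)) : ℝ := ∑ e ∈ E0 n, (wgt X Y e : ℝ)

lemma eBetween_cast (G : SimpleGraph (Fin n)) (X Y : Finset (Fin n)) :
    (eBetween G X Y : ℝ) = ∑ e ∈ G.edgeFinset, (wgt X Y e : ℝ) := by
  rw [eBetween_eq_sum]; push_cast; ring

lemma mgf_eq (p lam : ℝ) (X Y : Finset (Fin n)) :
    ∑ G : SimpleGraph (Fin n), erWeight n p G *
        Real.exp (lam * ((eBetween G X Y : ℝ) - p * mR X Y))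
    = ∏ e ∈ E0 n, (p * Real.exp (lam * (1 - p) * (wgt X Y e : ℝ))
        + (1 - p) * Real.exp (-(lam * p * (wgt X Y e : ℝ)))) := by
  rw [← sum_weight_mul_prod p (fun e => Real.exp (lam * (1 - p) * (wgt X Y e : ℝ)))
      (fun e => Real.exp (-(lam * p * (wgt X Y e : ℝ))))]
  refine Finset.sum_congr rfl fun G _ => ?_
  congr 1
  rw [← Real.exp_sum, ← Real.exp_sum, ← Real.exp_add]
  congr 1
  have hsplit : mR X Y = (∑ e ∈ G.edgeFinset, (wgt X Y e : ℝ))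
      + ∑ e ∈ (E0 n) \ G.edgeFinset, (wgt X Y e : ℝ) := by
    rw [mR, ← Finset.sum_sdiff (edgeFinset_subset_E0 G)]; ring
  have h1 : (∑ x ∈ G.edgeFinset, lam * (1 - p) * (wgt X Y x : ℝ))
      = lam * (1 - p) * ∑ e ∈ G.edgeFinset, (wgt X Y e : ℝ) := by rw [Finset.mul_sum]
  have h2 : (∑ x ∈ (E0 n) \ G.edgeFinset, -(lam * p * (wgt X Y x : ℝ)))
      = -(lam * p) * ∑ e ∈ (E0 n) \ G.edgeFinset, (wgt X Y e : ℝ) := by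
    rw [Finset.mul_sum]
    exact Finset.sum_congr rfl fun x _ => by ring
  rw [eBetween_cast, hsplit, h1, h2]
  ring

lemma mR_nonneg (X Y : Finset (Fin n)) : 0 ≤ mR X Y :=
  Finset.sum_nonneg fun e _ => Nat.cast_nonneg _

lemma mgf_bound {p : ℝ} (hp0 : 0 ≤ p) (hp1 : p ≤ 1) {lam : ℝ} (hlam : |lam| ≤ 1/2)
    (X Y : Finset (Fin n)) :
    ∑ G : SimpleGraph (Fin n), erWeight n p G *
        Real.exp (lam * ((eBetween G X Y : ℝ) - p * mR X Y))
      ≤ Real.exp (2 * lam^2 * mR X Y) := by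
  rw [mgf_eq]
  have habs := abs_nonneg lam
  have habs2 := (abs_le.1 hlam)
  have hfac : ∀ e ∈ E0 n,
      p * Real.exp (lam * (1 - p) * (wgt X Y e : ℝ))
        + (1 - p) * Real.exp (-(lam * p * (wgt X Y e : ℝ)))
      ≤ Real.exp (lam^2 * ((wgt X Y e : ℝ))^2) := by
    intro e _
    have hw0 : (0:ℝ) ≤ (wgt X Y e : ℝ) := Nat.cast_nonneg _
    have hw2 : (wgt X Y e : ℝ) ≤ 2 := by exact_mod_cast wgt_le_two X Y e
    have hZ : (0:ℝ) ≤ lam^2 * ((wgt X Y e : ℝ))^2 :=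
      mul_nonneg (sq_nonneg lam) (sq_nonneg _)
    refine two_point_mgf hp0 hp1 ?_ ?_ (by ring) ?_ ?_
    · have heq : |lam * (1 - p) * (wgt X Y e : ℝ)| = |lam| * (1 - p) * (wgt X Y e : ℝ) := by
        rw [abs_mul, abs_mul, abs_of_nonneg (by linarith : (0:ℝ) ≤ 1 - p), abs_of_nonneg hw0]
      have ha : |lam| * (1 - p) ≤ 1/2 := by nlinarith
      have ha0 : (0:ℝ) ≤ |lam| * (1 - p) := mul_nonneg habs (by linarith)
      rw [heq]
      calc |lam| * (1 - p) * (wgt X Y e : ℝ) ≤ 1/2 * (wgt X Y e : ℝ) :=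
            mul_le_mul_of_nonneg_right ha hw0
        _ ≤ 1 := by linarith
    · have heq : |(-(lam * p * (wgt X Y e : ℝ)))| = |lam| * p * (wgt X Y e : ℝ) := by
        rw [abs_neg, abs_mul, abs_mul, abs_of_nonneg hp0, abs_of_nonneg hw0]
      have ha : |lam| * p ≤ 1/2 := by nlinarith
      rw [heq]
      calc |lam| * p * (wgt X Y e : ℝ) ≤ 1/2 * (wgt X Y e : ℝ) :=
            mul_le_mul_of_nonneg_right ha hw0
        _ ≤ 1 := by linarith
    · have heq : (lam * (1 - p) * (wgt X Y e : ℝ))^2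
          = (1 - p)^2 * (lam^2 * ((wgt X Y e : ℝ))^2) := by ring
      rw [heq]
      have h1 : (1 - p)^2 ≤ 1 := by nlinarith
      calc (1 - p)^2 * (lam^2 * ((wgt X Y e : ℝ))^2)
          ≤ 1 * (lam^2 * ((wgt X Y e : ℝ))^2) := mul_le_mul_of_nonneg_right h1 hZ
        _ = lam^2 * ((wgt X Y e : ℝ))^2 := by ring
    · have heq : (-(lam * p * (wgt X Y e : ℝ)))^2
          = p^2 * (lam^2 * ((wgt X Y e : ℝ))^2) := by ring
      rw [heq]
      have h1 : p^2 ≤ 1 := by nlinarith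
      calc p^2 * (lam^2 * ((wgt X Y e : ℝ))^2)
          ≤ 1 * (lam^2 * ((wgt X Y e : ℝ))^2) := mul_le_mul_of_nonneg_right h1 hZ
        _ = lam^2 * ((wgt X Y e : ℝ))^2 := by ring
  calc ∏ e ∈ E0 n, (p * Real.exp (lam * (1 - p) * (wgt X Y e : ℝ))
        + (1 - p) * Real.exp (-(lam * p * (wgt X Y e : ℝ))))
      ≤ ∏ e ∈ E0 n, Real.exp (lam^2 * ((wgt X Y e : ℝ))^2) := by
        refine Finset.prod_le_prod (fun e _ => ?_) hfac
        have := Real.exp_pos (lam * (1 - p) * (wgt X Y e : ℝ))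
        have := Real.exp_pos (-(lam * p * (wgt X Y e : ℝ)))
        nlinarith
    _ = Real.exp (∑ e ∈ E0 n, lam^2 * ((wgt X Y e : ℝ))^2) := (Real.exp_sum _ _).symm
    _ ≤ Real.exp (2 * lam^2 * mR X Y) := by
        refine Real.exp_le_exp.2 ?_
        rw [mR, Finset.mul_sum]
        refine Finset.sum_le_sum fun e _ => ?_
        have hw0 : (0:ℝ) ≤ (wgt X Y e : ℝ) := Nat.cast_nonneg _
        have hw2 : (wgt X Y e : ℝ) ≤ 2 := by exact_mod_cast wgt_le_two X Y e
        have hww : ((wgt X Y e : ℝ))^2 ≤ 2 * (wgt X Y e : ℝ) := by nlinarith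
        calc lam^2 * ((wgt X Y e : ℝ))^2 ≤ lam^2 * (2 * (wgt X Y e : ℝ)) :=
              mul_le_mul_of_nonneg_left hww (sq_nonneg lam)
          _ = 2 * lam^2 * (wgt X Y e : ℝ) := by ring

lemma chernoff_side {p : ℝ} (hp0 : 0 ≤ p) (hp1 : p ≤ 1) (X Y : Finset (Fin n))
    {s t lam : ℝ} (hs : s = 1 ∨ s = -1) (hlam0 : 0 ≤ lam) (hlam : lam ≤ 1/2) :
    erProb n p (fun G => t ≤ s * ((eBetween G X Y : ℝ) - p * mR X Y))
      ≤ Real.exp (2 * lam^2 * mR X Y - lam * t) := by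
  have hs2 : s * s = 1 := by rcases hs with h|h <;> simp [h]
  have habs : |s * lam| ≤ 1/2 := by
    rcases hs with h|h <;> simp [h, abs_of_nonneg hlam0] <;> linarith [abs_of_nonneg hlam0]
  have key := mgf_bound hp0 hp1 habs X Y
  rw [erProb]
  have hpt : ∀ G : SimpleGraph (Fin n),
      (if (t ≤ s * ((eBetween G X Y : ℝ) - p * mR X Y)) then erWeight n p G else 0)
      ≤ erWeight n p G * Real.exp ((s * lam) * ((eBetween G X Y : ℝ) - p * mR X Y))
          * Real.exp (-(lam * t)) := by
    intro G
    set D := (eBetween G X Y : ℝ) - p * mR X Y with hD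
    by_cases h : t ≤ s * D
    · rw [if_pos h]
      have hW := erWeight_nonneg hp0 hp1 G
      have hexp : (1:ℝ) ≤ Real.exp ((s * lam) * D) * Real.exp (-(lam * t)) := by
        rw [← Real.exp_add]
        refine Real.one_le_exp ?_
        have : (s * lam) * D = lam * (s * D) := by ring
        rw [this]
        nlinarith
      calc erWeight n p G = erWeight n p G * 1 := by ring
        _ ≤ erWeight n p G * (Real.exp ((s * lam) * D) * Real.exp (-(lam * t))) :=
            mul_le_mul_of_nonneg_left hexp hW
        _ = erWeight n p G * Real.exp ((s * lam) * D) * Real.exp (-(lam * t)) := by ring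
    · rw [if_neg h]
      have hW := erWeight_nonneg hp0 hp1 G
      positivity
  calc (∑ G : SimpleGraph (Fin n), if (t ≤ s * ((eBetween G X Y : ℝ) - p * mR X Y)) then erWeight n p G else 0)
      ≤ ∑ G : SimpleGraph (Fin n), erWeight n p G
          * Real.exp ((s * lam) * ((eBetween G X Y : ℝ) - p * mR X Y)) * Real.exp (-(lam * t)) :=
        Finset.sum_le_sum fun G _ => hpt G
    _ = (∑ G : SimpleGraph (Fin n), erWeight n p G
          * Real.exp ((s * lam) * ((eBetween G X Y : ℝ) - p * mR X Y))) * Real.exp (-(lam * t)) := by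
        rw [Finset.sum_mul]
    _ ≤ Real.exp (2 * (s * lam)^2 * mR X Y) * Real.exp (-(lam * t)) := by
        refine mul_le_mul_of_nonneg_right key (Real.exp_pos _).le
    _ = Real.exp (2 * lam^2 * mR X Y - lam * t) := by
        rw [← Real.exp_add]
        congr 1
        have : (s * lam)^2 = lam^2 := by nlinarith
        rw [this]; ring

lemma erProb_nonneg {p : ℝ} (hp0 : 0 ≤ p) (hp1 : p ≤ 1) (A : SimpleGraph (Fin n) → Prop) :
    0 ≤ erProb n p A := by
  refine Finset.sum_nonneg fun G _ => ?_
  by_cases h : A G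
  · rw [if_pos h]; exact erWeight_nonneg hp0 hp1 G
  · rw [if_neg h]

lemma erProb_mono {p : ℝ} (hp0 : 0 ≤ p) (hp1 : p ≤ 1) {A B : SimpleGraph (Fin n) → Prop}
    (h : ∀ G, A G → B G) : erProb n p A ≤ erProb n p B := by
  refine Finset.sum_le_sum fun G _ => ?_
  by_cases hA : A G
  · rw [if_pos hA, if_pos (h G hA)]
  · rw [if_neg hA]
    by_cases hB : B G
    · rw [if_pos hB]; exact erWeight_nonneg hp0 hp1 G
    · rw [if_neg hB]

lemma erProb_or {p : ℝ} (hp0 : 0 ≤ p) (hp1 : p ≤ 1) (A B : SimpleGraph (Fin n) → Prop) :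
    erProb n p (fun G => A G ∨ B G) ≤ erProb n p A + erProb n p B := by
  rw [erProb, erProb, erProb, ← Finset.sum_add_distrib]
  refine Finset.sum_le_sum fun G _ => ?_
  have hW := erWeight_nonneg hp0 hp1 G
  by_cases hA : A G
  · rw [if_pos (Or.inl hA), if_pos hA]
    by_cases hB : B G
    · rw [if_pos hB]; linarith
    · rw [if_neg hB]; linarith
  · by_cases hB : B G
    · rw [if_pos (Or.inr hB), if_neg hA, if_pos hB]; linarith
    · rw [if_neg (by tauto), if_neg hA, if_neg hB]; linarith

lemma erProb_zero_of_forall_not {p : ℝ} {A : SimpleGraph (Fin n) → Prop}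
    (h : ∀ G, ¬ A G) : erProb n p A = 0 := by
  refine Finset.sum_eq_zero fun G _ => if_neg (h G)

lemma erProb_exists_le {p : ℝ} (hp0 : 0 ≤ p) (hp1 : p ≤ 1) {ι : Type*}
    (s : Finset ι) (A : ι → SimpleGraph (Fin n) → Prop) :
    erProb n p (fun G => ∃ i ∈ s, A i G) ≤ ∑ i ∈ s, erProb n p (A i) := by
  induction s using Finset.cons_induction with
  | empty =>
    rw [erProb_zero_of_forall_not (by simp), Finset.sum_empty]
  | cons a s ha ih =>
    rw [Finset.sum_cons]
    calc erProb n p (fun G => ∃ i ∈ Finset.cons a s ha, A i G)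
        ≤ erProb n p (fun G => A a G ∨ ∃ i ∈ s, A i G) := by
          refine erProb_mono hp0 hp1 fun G hG => ?_
          obtain ⟨i, hi, hAi⟩ := hG
          rcases Finset.mem_cons.1 hi with rfl | hi'
          · exact Or.inl hAi
          · exact Or.inr ⟨i, hi', hAi⟩
      _ ≤ erProb n p (A a) + erProb n p (fun G => ∃ i ∈ s, A i G) := erProb_or hp0 hp1 _ _
      _ ≤ erProb n p (A a) + ∑ i ∈ s, erProb n p (A i) := add_le_add le_rfl ih

lemma erProb_compl {p : ℝ} (A : SimpleGraph (Fin n) → Prop) :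
    erProb n p A = 1 - erProb n p (fun G => ¬ A G) := by
  have : erProb n p A + erProb n p (fun G => ¬ A G) = 1 := by
    rw [erProb, erProb, ← Finset.sum_add_distrib, ← sum_erWeight (n := n) p]
    refine Finset.sum_congr rfl fun G _ => ?_
    by_cases h : A G
    · rw [if_pos h, if_neg (by tauto)]; ring
    · rw [if_neg h, if_pos h]; ring
  linarith

lemma eBetween_le (G : SimpleGraph (Fin n)) (X Y : Finset (Fin n)) :
    eBetween G X Y ≤ X.card * Y.card := by
  rw [eBetween_eq_card, ← Finset.card_product]
  exact Finset.card_le_card (Finset.filter_subset _ _)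

lemma mR_eq (X Y : Finset (Fin n)) :
    mR X Y = (X.card : ℝ) * (Y.card : ℝ) - ((X ∩ Y).card : ℝ) := by
  have h1 := sum_wgt X Y
  have h2 := card_offdiag X Y
  rw [mR]
  rw [← Nat.cast_sum, h1]
  have : (((X ×ˢ Y).filter (fun uv => uv.1 ≠ uv.2)).card : ℝ) + ((X ∩ Y).card : ℝ)
      = (X.card : ℝ) * (Y.card : ℝ) := by exact_mod_cast congrArg (Nat.cast (R := ℝ)) h2
  linarith

set_option maxHeartbeats 2000000 in
lemma pair_bound {p : ℝ} (hp0 : 0 < p) (hp1 : p ≤ 1) {β : ℝ} (hβ : 2 ≤ β)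
    (X Y : Finset (Fin n)) :
    erProb n p (fun G =>
        ¬ (|(eBetween G X Y : ℝ) - p * X.card * Y.card| ≤ β * Real.sqrt (X.card * Y.card)))
      ≤ 2 * Real.exp (-(β^2/32)) := by
  set xr : ℝ := (X.card : ℝ) with hxr
  set yr : ℝ := (Y.card : ℝ) with hyr
  have hx0 : 0 ≤ xr := Nat.cast_nonneg _
  have hy0 : 0 ≤ yr := Nat.cast_nonneg _
  have hxy0 : 0 ≤ xr * yr := mul_nonneg hx0 hy0
  set sr : ℝ := Real.sqrt (xr * yr) with hsrdef
  have hsr0 : 0 ≤ sr := Real.sqrt_nonneg _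
  have hsr : sr ^ 2 = xr * yr := Real.sq_sqrt hxy0
  have hi0 : (0:ℝ) ≤ ((X ∩ Y).card : ℝ) := Nat.cast_nonneg _
  have hisr : ((X ∩ Y).card : ℝ) ≤ sr := by
    refine Real.le_sqrt_of_sq_le ?_
    have h1 : ((X ∩ Y).card : ℝ) ≤ xr := by
      rw [hxr]
      exact_mod_cast Finset.card_le_card (Finset.inter_subset_left)
    have h2 : ((X ∩ Y).card : ℝ) ≤ yr := by
      rw [hyr]
      exact_mod_cast Finset.card_le_card (Finset.inter_subset_right)
    nlinarith
  have hm : mR X Y = xr * yr - ((X ∩ Y).card : ℝ) := by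
    rw [mR_eq, hxr, hyr]
  have hmle : mR X Y ≤ xr * yr := by linarith
  have hm0 : 0 ≤ mR X Y := mR_nonneg X Y
  have hE : ∀ G : SimpleGraph (Fin n),
      (0:ℝ) ≤ (eBetween G X Y : ℝ) ∧ (eBetween G X Y : ℝ) ≤ xr * yr := by
    intro G
    refine ⟨Nat.cast_nonneg _, ?_⟩
    rw [hxr, hyr]
    exact_mod_cast eBetween_le G X Y
  by_cases hcase : sr ≤ β
  · -- trivial regime: the bad event never happens
    have hzero : erProb n p (fun G =>
        ¬ (|(eBetween G X Y : ℝ) - p * xr * yr| ≤ β * sr)) = 0 := by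
      refine erProb_zero_of_forall_not fun G hG => ?_
      refine hG ?_
      obtain ⟨he0, he1⟩ := hE G
      have hxs : xr * yr ≤ β * sr := by nlinarith
      have hpxy0 : 0 ≤ p * xr * yr := by nlinarith
      have hpxy1 : p * xr * yr ≤ xr * yr := by nlinarith
      rw [abs_le]
      exact ⟨by nlinarith, by nlinarith⟩
    rw [hzero]
    positivity
  · push_neg at hcase
    have hsr0' : 0 < sr := lt_of_le_of_lt (by linarith) hcase
    have hZ : 0 < xr * yr := by nlinarith
    obtain ⟨t, htdef⟩ : ∃ t : ℝ, t = (β - 1) * sr := ⟨_, rfl⟩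
    have ht0 : 0 ≤ t := by
      rw [htdef]; exact mul_nonneg (by linarith) hsr0
    obtain ⟨lam, hlamdef⟩ : ∃ l : ℝ, l = t / (4 * (xr * yr)) := ⟨_, rfl⟩
    have hlam0 : 0 ≤ lam := by
      rw [hlamdef]
      exact div_nonneg ht0 (by linarith)
    have htxy : t ≤ xr * yr := by
      rw [htdef]
      calc (β - 1) * sr ≤ sr * sr := mul_le_mul_of_nonneg_right (by linarith) hsr0
        _ = xr * yr := by rw [← hsr]; ring
    have hlam : lam ≤ 1/2 := by
      rw [hlamdef, div_le_iff₀ (by linarith : (0:ℝ) < 4 * (xr * yr))]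
      linarith
    have hdecomp : ∀ G : SimpleGraph (Fin n),
        ¬ (|(eBetween G X Y : ℝ) - p * xr * yr| ≤ β * sr) →
        (t ≤ (1:ℝ) * ((eBetween G X Y : ℝ) - p * mR X Y)
          ∨ t ≤ (-1:ℝ) * ((eBetween G X Y : ℝ) - p * mR X Y)) := by
      intro G hG
      rw [not_le] at hG
      have hpi0 : 0 ≤ p * ((X ∩ Y).card : ℝ) := by nlinarith
      have hpii : p * ((X ∩ Y).card : ℝ) ≤ ((X ∩ Y).card : ℝ) := by nlinarith
      rcases lt_abs.1 hG with h | h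
      · left
        rw [one_mul, hm, htdef]
        nlinarith
      · right
        rw [neg_one_mul, hm, htdef]
        nlinarith
    have hexp_le : Real.exp (2 * lam^2 * mR X Y - lam * t) ≤ Real.exp (-(β^2/32)) := by
      refine Real.exp_le_exp.2 ?_
      have h1 : 2 * lam^2 * mR X Y - lam * t ≤ 2 * lam^2 * (xr * yr) - lam * t := by
        nlinarith [sq_nonneg lam]
      have h2 : 2 * lam^2 * (xr * yr) - lam * t = -(t^2 / (8 * (xr * yr))) := by
        rw [hlamdef]
        field_simp
        ring
      have ht2 : t^2 = (β - 1)^2 * (xr * yr) := by rw [htdef]; nlinarith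
      have h3 : t^2 / (8 * (xr * yr)) = (β - 1)^2 / 8 := by
        rw [ht2]
        rw [mul_div_mul_right _ _ hZ.ne']
      have h4 : β^2/32 ≤ (β - 1)^2 / 8 := by nlinarith
      linarith
    have step1 : erProb n p (fun G =>
        ¬ (|(eBetween G X Y : ℝ) - p * xr * yr| ≤ β * sr))
        ≤ erProb n p (fun G => (t ≤ (1:ℝ) * ((eBetween G X Y : ℝ) - p * mR X Y))
            ∨ (t ≤ (-1:ℝ) * ((eBetween G X Y : ℝ) - p * mR X Y))) :=
      erProb_mono hp0.le hp1 hdecomp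
    have step2 : erProb n p (fun G => (t ≤ (1:ℝ) * ((eBetween G X Y : ℝ) - p * mR X Y))
            ∨ (t ≤ (-1:ℝ) * ((eBetween G X Y : ℝ) - p * mR X Y)))
        ≤ erProb n p (fun G => t ≤ (1:ℝ) * ((eBetween G X Y : ℝ) - p * mR X Y))
          + erProb n p (fun G => t ≤ (-1:ℝ) * ((eBetween G X Y : ℝ) - p * mR X Y)) :=
      erProb_or hp0.le hp1 _ _
    have c1 := chernoff_side (n := n) hp0.le hp1 X Y (s := 1) (t := t) (lam := lam)
      (Or.inl rfl) hlam0 hlam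
    have c2 := chernoff_side (n := n) hp0.le hp1 X Y (s := -1) (t := t) (lam := lam)
      (Or.inr rfl) hlam0 hlam
    have := add_le_add c1 c2
    calc erProb n p (fun G =>
        ¬ (|(eBetween G X Y : ℝ) - p * xr * yr| ≤ β * sr))
        ≤ erProb n p (fun G => t ≤ (1:ℝ) * ((eBetween G X Y : ℝ) - p * mR X Y))
          + erProb n p (fun G => t ≤ (-1:ℝ) * ((eBetween G X Y : ℝ) - p * mR X Y)) :=
          le_trans step1 step2
      _ ≤ Real.exp (2 * lam^2 * mR X Y - lam * t) + Real.exp (2 * lam^2 * mR X Y - lam * t) :=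
          add_le_add c1 c2
      _ ≤ 2 * Real.exp (-(β^2/32)) := by linarith
set_option maxHeartbeats 2000000 in
lemma not_jumbled_bound {p β : ℝ} (hp0 : 0 < p) (hp1 : p ≤ 1) (hβ : 2 ≤ β) :
    erProb n p (fun G => ¬ IsJumbled G p β)
      ≤ (4:ℝ)^n * (2 * Real.exp (-(β^2/32))) := by
  have hmono : ∀ G : SimpleGraph (Fin n), ¬ IsJumbled G p β →
      ∃ XY ∈ (Finset.univ : Finset (Finset (Fin n) × Finset (Fin n))),
        ¬ (|(eBetween G XY.1 XY.2 : ℝ) - p * XY.1.card * XY.2.card|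
            ≤ β * Real.sqrt (XY.1.card * XY.2.card)) := by
    intro G hG
    rw [IsJumbled] at hG
    push_neg at hG
    obtain ⟨X, Y, h⟩ := hG
    exact ⟨(X, Y), Finset.mem_univ _, not_le.2 h⟩
  have hcard : ((Finset.univ : Finset (Finset (Fin n) × Finset (Fin n))).card : ℝ)
      = (4:ℝ)^n := by
    rw [Finset.card_univ, Fintype.card_prod, Fintype.card_finset, Fintype.card_fin]
    push_cast
    rw [← mul_pow]
    norm_num
  calc erProb n p (fun G => ¬ IsJumbled G p β)
      ≤ erProb n p (fun G => ∃ XY ∈ (Finset.univ : Finset (Finset (Fin n) × Finset (Fin n))),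
          ¬ (|(eBetween G XY.1 XY.2 : ℝ) - p * XY.1.card * XY.2.card|
            ≤ β * Real.sqrt (XY.1.card * XY.2.card))) := erProb_mono hp0.le hp1 hmono
    _ ≤ ∑ XY ∈ (Finset.univ : Finset (Finset (Fin n) × Finset (Fin n))),
          erProb n p (fun G => ¬ (|(eBetween G XY.1 XY.2 : ℝ) - p * XY.1.card * XY.2.card|
            ≤ β * Real.sqrt (XY.1.card * XY.2.card))) :=
        erProb_exists_le hp0.le hp1 _ _
    _ ≤ ∑ _XY ∈ (Finset.univ : Finset (Finset (Fin n) × Finset (Fin n))),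
          2 * Real.exp (-(β^2/32)) :=
        Finset.sum_le_sum fun XY _ => pair_bound hp0 hp1 hβ XY.1 XY.2
    _ = (4:ℝ)^n * (2 * Real.exp (-(β^2/32))) := by
        rw [Finset.sum_const, nsmul_eq_mul, hcard]

end ERAux

set_option maxHeartbeats 2000000 in
theorem erdosRenyi_is_jumbled :
    ∀ k : ℕ, 1 ≤ k → ∀ C : ℝ, 1 ≤ C → ∃ n₀ : ℕ, ∀ n : ℕ, n₀ ≤ n →
      ∀ p : ℝ, p ∈ Set.Ioc (0 : ℝ) 1 →
        ((1200 * C ^ 4 * Real.log n) / n) ^ ((1 : ℝ) / (4 * (k : ℝ) - 1)) ≤ p →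
        1 - 1 / (n : ℝ) ≤ erProb n p (fun G => IsJumbled G p (p ^ k * n / C)) := by
  intro k hk C hC
  refine ⟨⌈(2400 * C^4)^2⌉₊ + 3, fun n hn p hp hplow => ?_⟩
  obtain ⟨hp0, hp1⟩ := hp
  have hC0 : (0:ℝ) < C := by linarith
  have hn3 : (3:ℕ) ≤ n := le_trans (by omega) hn
  have hN3 : (3:ℝ) ≤ (n:ℝ) := by exact_mod_cast hn3
  have hN0 : (0:ℝ) < (n:ℝ) := by linarith
  set N : ℝ := (n:ℝ) with hNdef
  set L : ℝ := Real.log N with hLdef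
  have hL1 : 1 ≤ L := by
    rw [hLdef, Real.le_log_iff_exp_le hN0]
    calc Real.exp 1 ≤ 2.7182818286 := Real.exp_one_lt_d9.le
      _ ≤ N := by linarith
  have hLN : L ≤ N := by
    have := Real.log_le_sub_one_of_pos hN0
    rw [← hLdef] at this
    linarith
  have hceil : ((2400 * C^4)^2 : ℝ) ≤ N := by
    have h1 : (⌈(2400 * C^4)^2⌉₊ : ℝ) ≤ N := by
      rw [hNdef]
      exact_mod_cast Nat.le_of_lt (by omega)
    exact le_trans (Nat.le_ceil _) h1
  have hsqrtN0 : 0 ≤ Real.sqrt N := Real.sqrt_nonneg _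
  have hsq : 2400 * C^4 ≤ Real.sqrt N := by
    refine Real.le_sqrt_of_sq_le ?_
    exact hceil
  have hlog2sqrt : L ≤ 2 * Real.sqrt N := by
    have h1 : Real.log (Real.sqrt N) = L / 2 := by
      rw [hLdef]; exact Real.log_sqrt hN0.le
    have h2 : Real.log (Real.sqrt N) ≤ Real.sqrt N - 1 :=
      Real.log_le_sub_one_of_pos (Real.sqrt_pos.2 hN0)
    rw [h1] at h2
    linarith
  set a : ℝ := 1200 * C^4 * L / N with hadef
  have hC4 : (1:ℝ) ≤ C^4 := by
    have := pow_le_pow_left₀ (by norm_num : (0:ℝ) ≤ 1) hC 4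
    simpa using this
  have ha0 : 0 < a := by
    rw [hadef]
    have : (0:ℝ) < 1200 * C^4 * L := by nlinarith
    positivity
  have ha1 : a ≤ 1 := by
    rw [hadef, div_le_one hN0]
    have hmul : (2400 * C^4) * Real.sqrt N ≤ Real.sqrt N * Real.sqrt N :=
      mul_le_mul_of_nonneg_right hsq hsqrtN0
    rw [Real.mul_self_sqrt hN0.le] at hmul
    nlinarith
  set K : ℝ := (k:ℝ) with hKdef
  have hK1 : (1:ℝ) ≤ K := by rw [hKdef]; exact_mod_cast hk
  have h4K : (0:ℝ) < 4*K - 1 := by linarith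
  -- p^(2k) ≥ a^(2/3)
  have hplow' : a ^ ((1:ℝ)/(4*K - 1)) ≤ p := hplow
  have hstep1 : (a ^ ((1:ℝ)/(4*K - 1))) ^ (2*k) ≤ p ^ (2*k) :=
    pow_le_pow_left₀ (Real.rpow_nonneg ha0.le _) hplow' (2*k)
  have hstep2 : (a ^ ((1:ℝ)/(4*K - 1))) ^ (2*k)
      = a ^ (((1:ℝ)/(4*K - 1)) * ((2*k : ℕ) : ℝ)) := by
    rw [← Real.rpow_natCast (a ^ ((1:ℝ)/(4*K - 1))) (2*k), ← Real.rpow_mul ha0.le]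
  have hexple : ((1:ℝ)/(4*K - 1)) * ((2*k : ℕ) : ℝ) ≤ 2/3 := by
    have hcast : ((2*k : ℕ) : ℝ) = 2*K := by rw [hKdef]; push_cast; ring
    rw [hcast, div_mul_eq_mul_div, one_mul, div_le_div_iff₀ h4K (by norm_num)]
    nlinarith
  have hstep3 : a ^ ((2:ℝ)/3) ≤ a ^ (((1:ℝ)/(4*K - 1)) * ((2*k : ℕ) : ℝ)) :=
    Real.rpow_le_rpow_of_exponent_ge ha0 ha1 hexple
  have hp2k : a ^ ((2:ℝ)/3) ≤ p ^ (2*k) := by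
    rw [hstep2] at hstep1
    exact le_trans hstep3 hstep1
  -- a^(2/3) ≥ 100*C^2*L/N
  set b : ℝ := 100 * C^2 * L / N with hbdef
  have hb0 : 0 < b := by
    rw [hbdef]
    have : (0:ℝ) < 100 * C^2 * L := by nlinarith
    positivity
  have hbcube : b ^ (3:ℕ) ≤ a ^ (2:ℕ) := by
    rw [hadef, hbdef, div_pow, div_pow, div_le_div_iff₀ (by positivity) (by positivity)]
    have hh1 : 0 ≤ N*(L-1) := mul_nonneg hN0.le (by linarith)
    have hC2 : (1:ℝ) ≤ C^2 := by
      have := pow_le_pow_left₀ (by norm_num : (0:ℝ) ≤ 1) hC 2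
      simpa using this
    have key : (100 * C^2 * L)^3 * N^2 ≤ (1200 * C^4 * L)^2 * N^3 := by
      have e1 : (100 * C^2 * L)^3 * N^2 = 1000000 * (C^2)^3 * L^3 * N^2 := by ring
      have e2 : (1200 * C^4 * L)^2 * N^3 = 1440000 * (C^4)^2 * L^2 * N^3 := by ring
      rw [e1, e2]
      have m1 : 1000000 * (C^2)^3 * L^3 * N^2 ≤ 1000000 * (C^2)^3 * L^2 * N^3 := by
        have hLLNN : L^3 * N^2 ≤ L^2 * N^3 := by
          calc L^3 * N^2 = L^2 * N^2 * L := by ring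
            _ ≤ L^2 * N^2 * N := by
                refine mul_le_mul_of_nonneg_left hLN ?_
                positivity
            _ = L^2 * N^3 := by ring
        nlinarith [pow_pos (lt_of_lt_of_le one_pos hC2) 3]
      have m2 : 1000000 * (C^2)^3 * L^2 * N^3 ≤ 1440000 * (C^4)^2 * L^2 * N^3 := by
        have hcc : (C^2)^3 ≤ (C^4)^2 := by
          have : (C^4)^2 = (C^2)^3 * C^2 := by ring
          nlinarith [pow_pos hC0 2, pow_pos hC0 6, pow_nonneg hC0.le 6]
        have hLN3 : (0:ℝ) ≤ L^2 * N^3 := by positivity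
        nlinarith
      linarith
    exact key
  have hba : b ≤ a ^ ((2:ℝ)/3) := by
    have hpow : (a ^ ((2:ℝ)/3)) ^ (3:ℕ) = a ^ (2:ℕ) := by
      rw [← Real.rpow_natCast (a ^ ((2:ℝ)/3)) 3, ← Real.rpow_mul ha0.le]
      norm_num
    refine le_of_pow_le_pow_left₀ (by norm_num : (3:ℕ) ≠ 0) (Real.rpow_nonneg ha0.le _) ?_
    rw [hpow]
    exact hbcube
  have hbp : b ≤ p ^ (2*k) := le_trans hba hp2k
  -- β² ≥ 100 N L and β ≥ 2
  set βv : ℝ := p ^ k * N / C with hβdef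
  have hβ0 : 0 < βv := by rw [hβdef]; positivity
  have hβsq : 100 * N * L ≤ βv^2 := by
    have hbv : βv^2 = p ^ (2*k) * N^2 / C^2 := by
      rw [hβdef]
      rw [div_pow, mul_pow]
      congr 2
      rw [← pow_mul, Nat.mul_comm]
    have hNC : (0:ℝ) ≤ N^2 / C^2 := by positivity
    have h1 : b * (N^2 / C^2) ≤ p ^ (2*k) * (N^2 / C^2) :=
      mul_le_mul_of_nonneg_right hbp hNC
    have h2 : b * (N^2 / C^2) = 100 * N * L := by
      rw [hbdef]
      field_simp
    rw [hbv]
    calc 100 * N * L = b * (N^2 / C^2) := h2.symm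
      _ ≤ p ^ (2*k) * (N^2 / C^2) := h1
      _ = p ^ (2*k) * N^2 / C^2 := by ring
  have hβ2 : 2 ≤ βv := by
    have h300 : (300:ℝ) ≤ βv^2 := by nlinarith
    nlinarith
  -- final assembly
  have hbound := ERAux.not_jumbled_bound (n := n) hp0 hp1 hβ2
  have hkey : (4:ℝ)^n * (2 * Real.exp (-(βv^2/32))) ≤ 1/N := by
    have hlog2 : Real.log 2 ≤ 0.7 := by linarith [Real.log_two_lt_d9.le]
    have hlog4 : Real.log 4 ≤ 1.4 := by
      have h44 : Real.log 4 = 2 * Real.log 2 := by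
        rw [show (4:ℝ) = 2^2 by norm_num, Real.log_pow]
        push_cast; ring
      linarith
    have hlog40 : 0 ≤ Real.log 4 := Real.log_nonneg (by norm_num)
    have h2 : (4:ℝ)^n * 2 * N = Real.exp (N * Real.log 4 + Real.log 2 + L) := by
      rw [hLdef, hNdef]
      rw [Real.exp_add, Real.exp_add, Real.exp_nat_mul, Real.exp_log (by norm_num : (0:ℝ) < 4),
        Real.exp_log (by norm_num : (0:ℝ) < 2),
        Real.exp_log (show (0:ℝ) < ((n:ℕ):ℝ) from hN0)]
    have hexpo : N * Real.log 4 + Real.log 2 + L ≤ βv^2/32 := by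
      have hNL1 : 0 ≤ N * (L - 1) := mul_nonneg hN0.le (by linarith)
      have hNL2 : 0 ≤ (N - 3) * L := mul_nonneg (by linarith) (by linarith)
      have hNlog : N * Real.log 4 ≤ N * 1.4 := mul_le_mul_of_nonneg_left hlog4 hN0.le
      nlinarith [hβsq]
    have hx : (4:ℝ)^n * 2 * N ≤ Real.exp (βv^2/32) := by
      rw [h2]; exact Real.exp_le_exp.2 hexpo
    have he := Real.exp_pos (βv^2/32)
    rw [Real.exp_neg]
    rw [show (4:ℝ)^n * (2 * (Real.exp (βv^2/32))⁻¹) = ((4:ℝ)^n * 2) / Real.exp (βv^2/32) by ring]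
    rw [div_le_div_iff₀ he hN0]
    nlinarith [hx]
  calc 1 - 1/N ≤ 1 - erProb n p (fun G => ¬ IsJumbled G p βv) := by
        have := le_trans hbound hkey
        linarith
    _ = erProb n p (fun G => IsJumbled G p βv) := (ERAux.erProb_compl _).symm
end

section
/- Let G be a graph on vertex set {1,…,n}, let p ∈ (0,1), ε > 0, and let s ≥ ℓ ≥ 2 be integers. Let x, x' ∈ {1,…,n}^s be tuples such that both C_{ℓ−1}(x) and C_{ℓ−1}(x') lie in [(1−ε)·E_{s,ℓ−1}, (1+ε)·E_{s,ℓ−1}]. Then |C_ℓ(x) − C_ℓ(x')| ≤ d·ℓ·(1+ε)·E_{s,ℓ−1}, where d := |{i ∈ {1,…,s} : x_i ≠ x'_i}|. -/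
open scoped Classical

/-- `C_ℓ(x)` for a tuple `x ∈ {1,…,n}^s`: the number of ordered `ℓ`-tuples of pairwise
distinct indices whose corresponding vertices are pairwise distinct and pairwise adjacent. -/
noncomputable def tupleCliqueCount {n s : ℕ} (G : SimpleGraph (Fin n)) (ℓ : ℕ)
    (x : Fin s → Fin n) : ℕ :=
  Set.ncard {i : Fin ℓ → Fin s | Function.Injective i ∧ Function.Injective (x ∘ i) ∧
    ∀ a b, a ≠ b → G.Adj (x (i a)) (x (i b))}

/-- `A_{s,ℓ} := binom(s,ℓ)·ℓ!/n^ℓ`. -/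
noncomputable def Asl (n s ℓ : ℕ) : ℝ :=
  (s.choose ℓ : ℝ) * (Nat.factorial ℓ) / (n : ℝ) ^ ℓ

/-- `E_{s,ℓ} := binom(n,ℓ)·ℓ!·p^{binom(ℓ,2)}·A_{s,ℓ}`. -/
noncomputable def Esl (n s ℓ : ℕ) (p : ℝ) : ℝ :=
  (n.choose ℓ : ℝ) * (Nat.factorial ℓ) * p ^ (ℓ.choose 2) * Asl n s ℓ

open Finset in
lemma tupleCliqueCount_one_sided {n s m : ℕ} (G : SimpleGraph (Fin n))
    (x y : Fin s → Fin n) :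
    tupleCliqueCount G (m + 1) x ≤ tupleCliqueCount G (m + 1) y +
      Set.ncard {j : Fin s | x j ≠ y j} * ((m + 1) * tupleCliqueCount G m x) := by
  classical
  set Px : (Fin (m+1) → Fin s) → Prop := fun i => Function.Injective i ∧
    Function.Injective (x ∘ i) ∧ ∀ a b, a ≠ b → G.Adj (x (i a)) (x (i b)) with hPx
  set Py : (Fin (m+1) → Fin s) → Prop := fun i => Function.Injective i ∧
    Function.Injective (y ∘ i) ∧ ∀ a b, a ≠ b → G.Adj (y (i a)) (y (i b)) with hPy
  set Pm : (Fin m → Fin s) → Prop := fun i => Function.Injective i ∧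
    Function.Injective (x ∘ i) ∧ ∀ a b, a ≠ b → G.Adj (x (i a)) (x (i b)) with hPm
  set Sx : Finset (Fin (m+1) → Fin s) := univ.filter Px with hSx
  set Sy : Finset (Fin (m+1) → Fin s) := univ.filter Py with hSy
  set Sm : Finset (Fin m → Fin s) := univ.filter Pm with hSm
  set D : Finset (Fin s) := univ.filter (fun j => x j ≠ y j) with hD
  have hcx : tupleCliqueCount G (m+1) x = Sx.card := by
    rw [tupleCliqueCount, ← Set.ncard_coe_finset]
    congr 1
    ext i
    simp [hSx, hPx]
  have hcy : tupleCliqueCount G (m+1) y = Sy.card := by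
    rw [tupleCliqueCount, ← Set.ncard_coe_finset]
    congr 1
    ext i
    simp [hSy, hPy]
  have hcm : tupleCliqueCount G m x = Sm.card := by
    rw [tupleCliqueCount, ← Set.ncard_coe_finset]
    congr 1
    ext i
    simp [hSm, hPm]
  have hcd : Set.ncard {j : Fin s | x j ≠ y j} = D.card := by
    rw [← Set.ncard_coe_finset]
    congr 1
    ext j
    simp [hD]
  rw [hcx, hcy, hcm, hcd]
  -- step 1 : Sx ⊆ Sy ∪ (bad set)
  have hsub : Sx ⊆ Sy ∪ Sx.filter (fun i => ∃ a, i a ∈ D) := by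
    intro i hi
    by_cases hbad : ∃ a, i a ∈ D
    · exact mem_union_right _ (mem_filter.2 ⟨hi, hbad⟩)
    · push_neg at hbad
      have heq : ∀ a, x (i a) = y (i a) := by
        intro a
        have := hbad a
        simp [hD] at this
        exact this
      refine mem_union_left _ ?_
      have hi' := (mem_filter.1 hi).2
      refine mem_filter.2 ⟨mem_univ _, hi'.1, ?_, ?_⟩
      · have : y ∘ i = x ∘ i := by funext a; exact (heq a).symm
        rw [this]; exact hi'.2.1
      · intro a b hab
        rw [← heq a, ← heq b]
        exact hi'.2.2 a b hab
  have h1 : Sx.card ≤ Sy.card + (Sx.filter (fun i => ∃ a, i a ∈ D)).card :=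
    le_trans (card_le_card hsub) (card_union_le _ _)
  -- step 2 : bound the bad set
  have h2 : (Sx.filter (fun i => ∃ a, i a ∈ D)).card ≤ (m + 1) * (D.card * Sm.card) := by
    have hsub2 : Sx.filter (fun i => ∃ a, i a ∈ D) ⊆
        (univ : Finset (Fin (m+1))).biUnion
          (fun a => D.biUnion (fun j => Sx.filter (fun i => i a = j))) := by
      intro i hi
      obtain ⟨hiSx, a, ha⟩ := mem_filter.1 hi
      exact mem_biUnion.2 ⟨a, mem_univ _, mem_biUnion.2 ⟨i a, ha,
        mem_filter.2 ⟨hiSx, rfl⟩⟩⟩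
    refine le_trans (card_le_card hsub2) (le_trans (card_biUnion_le) ?_)
    have hinner : ∀ a : Fin (m+1),
        (D.biUnion (fun j => Sx.filter (fun i => i a = j))).card ≤ D.card * Sm.card := by
      intro a
      refine le_trans card_biUnion_le ?_
      have hone : ∀ j : Fin s, (Sx.filter (fun i => i a = j)).card ≤ Sm.card := by
        intro j
        apply card_le_card_of_injOn (fun i => i ∘ a.succAbove)
        · intro i hi
          obtain ⟨hiSx, _⟩ := mem_filter.1 hi
          have hi' := (mem_filter.1 hiSx).2
          refine mem_filter.2 ⟨mem_univ _, hi'.1.comp Fin.succAbove_right_injective,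
            hi'.2.1.comp Fin.succAbove_right_injective, ?_⟩
          intro c c' hcc
          exact hi'.2.2 _ _ (fun h => hcc (Fin.succAbove_right_injective h))
        · intro i hi i' hi' heq
          have hij : i a = j := (mem_filter.1 hi).2
          have hij' : i' a = j := (mem_filter.1 hi').2
          funext b
          by_cases hb : b = a
          · rw [hb, hij, hij']
          · obtain ⟨c, hc⟩ := Fin.exists_succAbove_eq (Ne.symm (Ne.intro hb) : a ≠ b).symm
            rw [← hc]
            exact congrFun heq c
      calc ∑ j ∈ D, (Sx.filter (fun i => i a = j)).card
          ≤ ∑ _j ∈ D, Sm.card := Finset.sum_le_sum (fun j _ => hone j)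
        _ = D.card * Sm.card := by rw [Finset.sum_const, smul_eq_mul]
    calc ∑ a : Fin (m+1),
          (D.biUnion (fun j => Sx.filter (fun i => i a = j))).card
        ≤ ∑ _a : Fin (m+1), D.card * Sm.card := Finset.sum_le_sum (fun a _ => hinner a)
      _ = (m + 1) * (D.card * Sm.card) := by simp [Finset.sum_const, mul_comm]
  calc Sx.card ≤ Sy.card + (Sx.filter (fun i => ∃ a, i a ∈ D)).card := h1
    _ ≤ Sy.card + (m + 1) * (D.card * Sm.card) := Nat.add_le_add_left h2 _
    _ = Sy.card + D.card * ((m + 1) * Sm.card) := by ring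

theorem tupleCliqueCount_bounded_differences {n s ℓ : ℕ} (hℓ : 2 ≤ ℓ) (hs : ℓ ≤ s)
    (G : SimpleGraph (Fin n)) (p ε : ℝ) (hp : p ∈ Set.Ioo (0 : ℝ) 1) (hε : 0 < ε)
    (x x' : Fin s → Fin n)
    (hx : (tupleCliqueCount G (ℓ - 1) x : ℝ) ∈
      Set.Icc ((1 - ε) * Esl n s (ℓ - 1) p) ((1 + ε) * Esl n s (ℓ - 1) p))
    (hx' : (tupleCliqueCount G (ℓ - 1) x' : ℝ) ∈
      Set.Icc ((1 - ε) * Esl n s (ℓ - 1) p) ((1 + ε) * Esl n s (ℓ - 1) p)) :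
    |(tupleCliqueCount G ℓ x : ℝ) - (tupleCliqueCount G ℓ x' : ℝ)| ≤
      (Set.ncard {i : Fin s | x i ≠ x' i} : ℝ) * (ℓ : ℝ) * (1 + ε) * Esl n s (ℓ - 1) p := by
  obtain ⟨m, rfl⟩ : ∃ m, ℓ = m + 1 := ⟨ℓ - 1, by omega⟩
  have hm1 : m + 1 - 1 = m := rfl
  rw [hm1] at hx hx' ⊢
  set E := Esl n s m p with hE
  set d : ℕ := Set.ncard {i : Fin s | x i ≠ x' i} with hd
  have hdsym : Set.ncard {i : Fin s | x' i ≠ x i} = d := by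
    rw [hd]; congr 1; ext i; exact ne_comm
  have key1 := tupleCliqueCount_one_sided (m := m) G x x'
  have key2 := tupleCliqueCount_one_sided (m := m) G x' x
  rw [hdsym] at key2
  have hCx : (tupleCliqueCount G m x : ℝ) ≤ (1 + ε) * E := hx.2
  have hCx' : (tupleCliqueCount G m x' : ℝ) ≤ (1 + ε) * E := hx'.2
  have hdnn : (0:ℝ) ≤ (d : ℝ) := Nat.cast_nonneg d
  have hcast1 : (tupleCliqueCount G (m+1) x : ℝ) ≤ (tupleCliqueCount G (m+1) x' : ℝ)
      + (d : ℝ) * ((m + 1 : ℝ) * (tupleCliqueCount G m x : ℝ)) := by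
    have := key1
    have : ((tupleCliqueCount G (m+1) x : ℕ) : ℝ) ≤
        ((tupleCliqueCount G (m+1) x' + d * ((m+1) * tupleCliqueCount G m x) : ℕ) : ℝ) := by
      exact_mod_cast this
    push_cast at this
    linarith
  have hcast2 : (tupleCliqueCount G (m+1) x' : ℝ) ≤ (tupleCliqueCount G (m+1) x : ℝ)
      + (d : ℝ) * ((m + 1 : ℝ) * (tupleCliqueCount G m x' : ℝ)) := by
    have : ((tupleCliqueCount G (m+1) x' : ℕ) : ℝ) ≤
        ((tupleCliqueCount G (m+1) x + d * ((m+1) * tupleCliqueCount G m x') : ℕ) : ℝ) := by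
      exact_mod_cast key2
    push_cast at this
    linarith
  have hmnn : (0:ℝ) ≤ (m + 1 : ℝ) := by positivity
  rw [abs_sub_le_iff]
  constructor
  · have : (d : ℝ) * ((m + 1 : ℝ) * (tupleCliqueCount G m x : ℝ)) ≤
        (d : ℝ) * ((m + 1 : ℝ) * ((1 + ε) * E)) := by
      apply mul_le_mul_of_nonneg_left (mul_le_mul_of_nonneg_left hCx hmnn) hdnn
    push_cast
    linarith
  · have : (d : ℝ) * ((m + 1 : ℝ) * (tupleCliqueCount G m x' : ℝ)) ≤
        (d : ℝ) * ((m + 1 : ℝ) * ((1 + ε) * E)) := by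
      apply mul_le_mul_of_nonneg_left (mul_le_mul_of_nonneg_left hCx' hmnn) hdnn
    push_cast
    linarith
end

section
/- Let 𝒟 be a probability distribution over graphs on vertex set {1,…,n}, G a graph on {1,…,n}, P a graph on vertex set {1,…,ℓ} with ℓ ≥ 2, ε > 0, and s ≥ ℓ. Let x, x' ∈ {1,…,n}^s be tuples such that for every induced subgraph P' of P on ℓ−1 vertices, both C_{P'}(x) and C_{P'}(x') lie in [(1−ε)·S_𝒟(P',s), (1+ε)·S_𝒟(P',s)]. Then |C_P(x) − C_P(x')| ≤ d·(1+ε)·ℓ²·max_{P'} S_𝒟(P',s), where d := |{i ∈ {1,…,s} : x_i ≠ x'_i}| and the maximum is over induced subgraphs P' of P on ℓ−1 vertices. -/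
open scoped Classical

/-- `C_P(G)`: the number of labeled induced copies of `P` in `G`. -/
noncomputable def inducedCopyCount {ℓ n : ℕ} (P : SimpleGraph (Fin ℓ))
    (G : SimpleGraph (Fin n)) : ℕ :=
  Set.ncard {ψ : Fin ℓ → Fin n | Function.Injective ψ ∧
    ∀ u v, u ≠ v → (G.Adj (ψ u) (ψ v) ↔ P.Adj u v)}

/-- `C_P(x)` for a tuple `x ∈ {1,…,n}^s`. -/
noncomputable def tupleMotifCount {n s ℓ : ℕ} (G : SimpleGraph (Fin n))
    (P : SimpleGraph (Fin ℓ)) (x : Fin s → Fin n) : ℕ :=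
  Set.ncard {i : Fin ℓ → Fin s | Function.Injective i ∧ Function.Injective (x ∘ i) ∧
    ∀ a b, a ≠ b → (G.Adj (x (i a)) (x (i b)) ↔ P.Adj a b)}

/-- `F_𝒟(P) := E_{G∼𝒟}[C_P(G)]/(binom(n,ℓ)·ℓ!)`, where `𝒟` is given by its weight
function on graphs on `{1,…,n}`. -/
noncomputable def distF {n ℓ : ℕ} (𝒟 : SimpleGraph (Fin n) → ℝ)
    (P : SimpleGraph (Fin ℓ)) : ℝ :=
  (∑ G : SimpleGraph (Fin n), 𝒟 G * (inducedCopyCount P G : ℝ)) /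
    ((n.choose ℓ : ℝ) * (Nat.factorial ℓ))

/-- `S_𝒟(P,s) := binom(n,ℓ)·ℓ!·F_𝒟(P)·A_{s,ℓ}`. -/
noncomputable def distS {n ℓ : ℕ} (𝒟 : SimpleGraph (Fin n) → ℝ)
    (P : SimpleGraph (Fin ℓ)) (s : ℕ) : ℝ :=
  (n.choose ℓ : ℝ) * (Nat.factorial ℓ) * distF 𝒟 P * Asl n s ℓ

/-- `P'` is (isomorphic to) an induced subgraph of `P`. -/
def IsInducedSubgraphOn {m ℓ : ℕ} (P' : SimpleGraph (Fin m)) (P : SimpleGraph (Fin ℓ)) : Prop :=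
  ∃ φ : Fin m → Fin ℓ, Function.Injective φ ∧
    ∀ a b, a ≠ b → (P.Adj (φ a) (φ b) ↔ P'.Adj a b)

/-- The defining condition of `tupleMotifCount`. -/
private def Cond {n s ℓ : ℕ} (G : SimpleGraph (Fin n)) (P : SimpleGraph (Fin ℓ))
    (y : Fin s → Fin n) (i : Fin ℓ → Fin s) : Prop :=
  Function.Injective i ∧ Function.Injective (y ∘ i) ∧
    ∀ a b, a ≠ b → (G.Adj (y (i a)) (y (i b)) ↔ P.Adj a b)

private lemma tupleMotifCount_eq_ncard {n s ℓ : ℕ} (G : SimpleGraph (Fin n))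
    (P : SimpleGraph (Fin ℓ)) (y : Fin s → Fin n) :
    tupleMotifCount G P y = {i : Fin ℓ → Fin s | Cond G P y i}.ncard := rfl

private lemma exists_pivot {ℓ : ℕ} (hℓ : 2 ≤ ℓ) (a : Fin ℓ) :
    ∃ φ : Fin (ℓ - 1) → Fin ℓ, Function.Injective φ ∧ (∀ b, φ b ≠ a) ∧
      (∀ c, c ≠ a → ∃ b, φ b = c) := by
  have h1 : ℓ - 1 + 1 = ℓ := by omega
  set p : Fin (ℓ - 1 + 1) := (finCongr h1).symm a with hp
  refine ⟨fun b => finCongr h1 (p.succAbove b), ?_, ?_, ?_⟩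
  · exact (finCongr h1).injective.comp Fin.succAbove_right_injective
  · intro b h
    have : p.succAbove b = p := (finCongr h1).injective (h.trans (by simp [hp]))
    exact Fin.succAbove_ne p b this
  · intro c hc
    obtain ⟨b, hb⟩ := Fin.exists_succAbove_eq (x := (finCongr h1).symm c) (y := p)
      (fun h => hc (by simpa [hp] using congrArg (finCongr h1) h))
    exact ⟨b, by show (finCongr h1) (p.succAbove b) = c; rw [hb]; simp⟩

private lemma card_fixed_le {n s ℓ : ℕ} (hℓ : 2 ≤ ℓ) (G : SimpleGraph (Fin n))
    (P : SimpleGraph (Fin ℓ)) (x : Fin s → Fin n) (a : Fin ℓ) (j : Fin s) :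
    ∃ P' : SimpleGraph (Fin (ℓ - 1)), IsInducedSubgraphOn P' P ∧
      ({i : Fin ℓ → Fin s | Cond G P x i ∧ i a = j}).ncard ≤ tupleMotifCount G P' x := by
  obtain ⟨φ, hinj, hne, hsurj⟩ := exists_pivot hℓ a
  refine ⟨P.comap φ, ⟨φ, hinj, fun _ _ _ => Iff.rfl⟩, ?_⟩
  rw [tupleMotifCount_eq_ncard]
  apply Set.ncard_le_ncard_of_injOn (fun i => i ∘ φ)
  · rintro i ⟨⟨h1, h2, h3⟩, -⟩
    exact ⟨h1.comp hinj, h2.comp hinj, fun c d hcd => h3 _ _ (fun h => hcd (hinj h))⟩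
  · rintro i ⟨-, hia⟩ i' ⟨-, hia'⟩ h
    funext b
    rcases eq_or_ne b a with rfl | hb
    · rw [hia, hia']
    · obtain ⟨c, rfl⟩ := hsurj b hb
      exact congrFun h c

theorem tupleMotifCount_bounded_differences {n ℓ s : ℕ} (hℓ : 2 ≤ ℓ) (hs : ℓ ≤ s)
    (𝒟 : SimpleGraph (Fin n) → ℝ) (h𝒟0 : ∀ G, 0 ≤ 𝒟 G)
    (h𝒟1 : ∑ G : SimpleGraph (Fin n), 𝒟 G = 1)
    (G : SimpleGraph (Fin n)) (P : SimpleGraph (Fin ℓ)) (ε : ℝ) (hε : 0 < ε)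
    (x x' : Fin s → Fin n)
    (hx : ∀ P' : SimpleGraph (Fin (ℓ - 1)), IsInducedSubgraphOn P' P →
      (tupleMotifCount G P' x : ℝ) ∈
        Set.Icc ((1 - ε) * distS 𝒟 P' s) ((1 + ε) * distS 𝒟 P' s) ∧
      (tupleMotifCount G P' x' : ℝ) ∈
        Set.Icc ((1 - ε) * distS 𝒟 P' s) ((1 + ε) * distS 𝒟 P' s)) :
    |(tupleMotifCount G P x : ℝ) - (tupleMotifCount G P x' : ℝ)| ≤
      (Set.ncard {i : Fin s | x i ≠ x' i} : ℝ) * (1 + ε) * (ℓ : ℝ) ^ 2 *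
        sSup {y : ℝ | ∃ P' : SimpleGraph (Fin (ℓ - 1)),
          IsInducedSubgraphOn P' P ∧ y = distS 𝒟 P' s} := by
  classical
  set D : Set (Fin s) := {i : Fin s | x i ≠ x' i} with hDdef
  set M : ℝ := sSup {y : ℝ | ∃ P' : SimpleGraph (Fin (ℓ - 1)),
      IsInducedSubgraphOn P' P ∧ y = distS 𝒟 P' s} with hMdef
  have hfin : {y : ℝ | ∃ P' : SimpleGraph (Fin (ℓ - 1)),
      IsInducedSubgraphOn P' P ∧ y = distS 𝒟 P' s}.Finite := by
    apply Set.Finite.subset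
      (Set.finite_range (fun P' : SimpleGraph (Fin (ℓ - 1)) => distS 𝒟 P' s))
    rintro y ⟨P', -, rfl⟩; exact ⟨P', rfl⟩
  have hle_M : ∀ P' : SimpleGraph (Fin (ℓ - 1)), IsInducedSubgraphOn P' P →
      distS 𝒟 P' s ≤ M := fun P' hP' => le_csSup hfin.bddAbove ⟨P', hP', rfl⟩
  have hS_nonneg : ∀ P' : SimpleGraph (Fin (ℓ - 1)), IsInducedSubgraphOn P' P →
      0 ≤ distS 𝒟 P' s := by
    intro P' hP'
    have h := (hx P' hP').1
    have h0 : (0:ℝ) ≤ (tupleMotifCount G P' x : ℝ) := Nat.cast_nonneg _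
    nlinarith [h.1, h.2]
  have hM0 : 0 ≤ M := by
    obtain ⟨P0, hP0⟩ : ∃ P' : SimpleGraph (Fin (ℓ - 1)), IsInducedSubgraphOn P' P :=
      ⟨P.comap (Fin.castLE (Nat.sub_le ℓ 1)), Fin.castLE (Nat.sub_le ℓ 1),
        Fin.castLE_injective _, fun _ _ _ => Iff.rfl⟩
    exact le_trans (hS_nonneg P0 hP0) (hle_M P0 hP0)
  have hkey : ∀ P' : SimpleGraph (Fin (ℓ - 1)), IsInducedSubgraphOn P' P →
      ∀ y : Fin s → Fin n, y = x ∨ y = x' →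
      (tupleMotifCount G P' y : ℝ) ≤ (1 + ε) * M := by
    intro P' hP' y hy
    have hub : (tupleMotifCount G P' y : ℝ) ≤ (1 + ε) * distS 𝒟 P' s := by
      rcases hy with rfl | rfl
      · exact (hx P' hP').1.2
      · exact (hx P' hP').2.2
    exact hub.trans (mul_le_mul_of_nonneg_left (hle_M P' hP') (by linarith))
  have hbad : ∀ y : Fin s → Fin n, y = x ∨ y = x' →
      ({i : Fin ℓ → Fin s | Cond G P y i ∧ ∃ a, i a ∈ D}.ncard : ℝ) ≤
        (D.ncard : ℝ) * (ℓ : ℝ) * ((1 + ε) * M) := by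
    intro y hy
    have hsub : {i : Fin ℓ → Fin s | Cond G P y i ∧ ∃ a, i a ∈ D}.toFinset ⊆
        (D.toFinset ×ˢ (Finset.univ : Finset (Fin ℓ))).biUnion
          (fun p => {i : Fin ℓ → Fin s | Cond G P y i ∧ i p.2 = p.1}.toFinset) := by
      intro i hi
      rw [Set.mem_toFinset] at hi
      obtain ⟨hc, a, ha⟩ := hi
      rw [Finset.mem_biUnion]
      exact ⟨(i a, a), Finset.mem_product.2 ⟨Set.mem_toFinset.2 ha, Finset.mem_univ _⟩,
        Set.mem_toFinset.2 ⟨hc, rfl⟩⟩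
    have h1 : {i : Fin ℓ → Fin s | Cond G P y i ∧ ∃ a, i a ∈ D}.ncard ≤
        ∑ p ∈ D.toFinset ×ˢ (Finset.univ : Finset (Fin ℓ)),
          {i : Fin ℓ → Fin s | Cond G P y i ∧ i p.2 = p.1}.ncard := by
      rw [Set.ncard_eq_toFinset_card']
      calc _ ≤ _ := Finset.card_le_card hsub
        _ ≤ _ := Finset.card_biUnion_le
        _ = _ := by
          refine Finset.sum_congr rfl fun p _ => ?_
          rw [Set.ncard_eq_toFinset_card']
    have h2 : ∀ p ∈ D.toFinset ×ˢ (Finset.univ : Finset (Fin ℓ)),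
        ({i : Fin ℓ → Fin s | Cond G P y i ∧ i p.2 = p.1}.ncard : ℝ) ≤ (1 + ε) * M := by
      intro p _
      obtain ⟨P', hP', hle⟩ := card_fixed_le hℓ G P y p.2 p.1
      exact le_trans (by exact_mod_cast hle) (hkey P' hP' y hy)
    calc ({i : Fin ℓ → Fin s | Cond G P y i ∧ ∃ a, i a ∈ D}.ncard : ℝ)
        ≤ ((∑ p ∈ D.toFinset ×ˢ (Finset.univ : Finset (Fin ℓ)),
            {i : Fin ℓ → Fin s | Cond G P y i ∧ i p.2 = p.1}.ncard : ℕ) : ℝ) :=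
          Nat.cast_le.2 h1
      _ = ∑ p ∈ D.toFinset ×ˢ (Finset.univ : Finset (Fin ℓ)),
            ({i : Fin ℓ → Fin s | Cond G P y i ∧ i p.2 = p.1}.ncard : ℝ) := by push_cast; rfl
      _ ≤ ∑ _p ∈ D.toFinset ×ˢ (Finset.univ : Finset (Fin ℓ)), (1 + ε) * M :=
          Finset.sum_le_sum h2
      _ = ((D.toFinset ×ˢ (Finset.univ : Finset (Fin ℓ))).card : ℝ) * ((1 + ε) * M) := by
          rw [Finset.sum_const, nsmul_eq_mul]
      _ = (D.ncard : ℝ) * (ℓ : ℝ) * ((1 + ε) * M) := by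
          rw [Finset.card_product, Finset.card_univ, Fintype.card_fin,
            Set.ncard_eq_toFinset_card' D]
          push_cast; ring
  have hcond_iff : ∀ i : Fin ℓ → Fin s, (∀ a, x (i a) = x' (i a)) →
      (Cond G P x i ↔ Cond G P x' i) := by
    intro i h
    have hc : x ∘ i = x' ∘ i := funext h
    unfold Cond
    rw [hc]
    simp only [h]
  have hgood_eq : {i : Fin ℓ → Fin s | Cond G P x i ∧ ∀ a, i a ∉ D} =
      {i : Fin ℓ → Fin s | Cond G P x' i ∧ ∀ a, i a ∉ D} := by
    ext i
    simp only [Set.mem_setOf_eq]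
    constructor
    · rintro ⟨hc, hall⟩
      exact ⟨(hcond_iff i fun a => not_not.1 (hall a)).1 hc, hall⟩
    · rintro ⟨hc, hall⟩
      exact ⟨(hcond_iff i fun a => not_not.1 (hall a)).2 hc, hall⟩
  have hcount : ∀ y : Fin s → Fin n, tupleMotifCount G P y =
      {i : Fin ℓ → Fin s | Cond G P y i ∧ ∀ a, i a ∉ D}.ncard +
      {i : Fin ℓ → Fin s | Cond G P y i ∧ ∃ a, i a ∈ D}.ncard := by
    intro y
    rw [tupleMotifCount_eq_ncard]
    rw [show {i : Fin ℓ → Fin s | Cond G P y i} =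
        {i : Fin ℓ → Fin s | Cond G P y i ∧ ∀ a, i a ∉ D} ∪
        {i : Fin ℓ → Fin s | Cond G P y i ∧ ∃ a, i a ∈ D} by
      ext i
      simp only [Set.mem_union, Set.mem_setOf_eq]
      by_cases h : ∃ a, i a ∈ D
      · tauto
      · push_neg at h; tauto]
    apply Set.ncard_union_eq
    · rw [Set.disjoint_left]
      rintro i ⟨-, hall⟩ ⟨-, a, ha⟩
      exact hall a ha
    · exact Set.toFinite _
    · exact Set.toFinite _
  have hdiff : (tupleMotifCount G P x : ℝ) - (tupleMotifCount G P x' : ℝ) =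
      ({i : Fin ℓ → Fin s | Cond G P x i ∧ ∃ a, i a ∈ D}.ncard : ℝ) -
      ({i : Fin ℓ → Fin s | Cond G P x' i ∧ ∃ a, i a ∈ D}.ncard : ℝ) := by
    rw [hcount x, hcount x', hgood_eq]
    push_cast; ring
  rw [hdiff]
  have hbx := hbad x (Or.inl rfl)
  have hbx' := hbad x' (Or.inr rfl)
  have hbx0 : (0:ℝ) ≤ ({i : Fin ℓ → Fin s | Cond G P x i ∧ ∃ a, i a ∈ D}.ncard : ℝ) :=
    Nat.cast_nonneg _
  have hbx0' : (0:ℝ) ≤ ({i : Fin ℓ → Fin s | Cond G P x' i ∧ ∃ a, i a ∈ D}.ncard : ℝ) :=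
    Nat.cast_nonneg _
  have hl2 : (ℓ : ℝ) ≤ (ℓ : ℝ) ^ 2 := by
    have h1 : (1:ℝ) ≤ (ℓ : ℝ) := by exact_mod_cast le_trans one_le_two hℓ
    nlinarith
  have h1 : (D.ncard : ℝ) * (ℓ : ℝ) * ((1 + ε) * M) ≤
      (D.ncard : ℝ) * (1 + ε) * (ℓ : ℝ) ^ 2 * M := by
    nlinarith [mul_nonneg (mul_nonneg (mul_nonneg (Nat.cast_nonneg (α := ℝ) D.ncard)
      (by linarith : (0:ℝ) ≤ 1 + ε)) hM0) (sub_nonneg.2 hl2)]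
  rw [abs_sub_le_iff]
  constructor <;> linarith
end

section
/- Let p ∈ (0,1/2], let H be a graph on k vertices, and let 3 ≤ ℓ ≤ k. Then r_{ℓ−1}(H) ≥ r_ℓ(H). -/
open scoped Classical

/-- `F_p(M) := p^{e(M)}·(1−p)^{binom(m,2)−e(M)}` for a graph `M` on `m` vertices. -/
noncomputable def Fdens (p : ℝ) {m : ℕ} (M : SimpleGraph (Fin m)) : ℝ :=
  p ^ M.edgeSet.ncard * (1 - p) ^ (m.choose 2 - M.edgeSet.ncard)

/-- `r_ℓ(H)`: the minimum over induced subgraphs `H₁` of `H` on `ℓ` vertices of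
`F_p(H₁)²` divided by the maximum over induced subgraphs `H₂` of `H₁` on `ℓ−1`
vertices of `F_p(H₂)²`. -/
noncomputable def densityIncrement (p : ℝ) {k : ℕ} (H : SimpleGraph (Fin k)) (ℓ : ℕ) : ℝ :=
  sInf {y : ℝ | ∃ H₁ : SimpleGraph (Fin ℓ), IsInducedSubgraphOn H₁ H ∧
    y = (Fdens p H₁) ^ 2 /
      sSup {z : ℝ | ∃ H₂ : SimpleGraph (Fin (ℓ - 1)),
        IsInducedSubgraphOn H₂ H₁ ∧ z = (Fdens p H₂) ^ 2}}

/-! ### Auxiliary lemmas -/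

section Aux

open Function

lemma Fdens_pos {p : ℝ} (hp0 : 0 < p) (hp1 : p < 1) {m : ℕ} (M : SimpleGraph (Fin m)) :
    0 < Fdens p M :=
  mul_pos (pow_pos hp0 _) (pow_pos (by linarith) _)

lemma isInducedSubgraphOn_comap {a b : ℕ} (G : SimpleGraph (Fin b)) (φ : Fin a → Fin b)
    (hφ : Injective φ) : IsInducedSubgraphOn (G.comap φ) G :=
  ⟨φ, hφ, fun _ _ _ => Iff.rfl⟩

lemma eq_comap_of_isInducedSubgraphOn {a b : ℕ} {P' : SimpleGraph (Fin a)}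
    {P : SimpleGraph (Fin b)} (h : IsInducedSubgraphOn P' P) :
    ∃ φ : Fin a → Fin b, Injective φ ∧ P' = P.comap φ := by
  obtain ⟨φ, hφ, hadj⟩ := h
  refine ⟨φ, hφ, ?_⟩
  ext x y
  simp only [SimpleGraph.comap_adj]
  constructor
  · intro hxy
    exact (hadj x y hxy.ne).2 hxy
  · intro hxy
    have hne : x ≠ y := fun he => hxy.ne (by rw [he])
    exact (hadj x y hne).1 hxy

lemma edgeSet_ncard_le {m : ℕ} (M : SimpleGraph (Fin m)) : M.edgeSet.ncard ≤ m.choose 2 := by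
  classical
  rw [Set.ncard_eq_toFinset_card']
  have h : M.edgeSet.toFinset = M.edgeFinset := by ext e; simp
  rw [h]
  simpa using M.card_edgeFinset_le_card_choose_two

lemma neighborSet_ncard_le {m : ℕ} (M : SimpleGraph (Fin (m+1))) (v : Fin (m+1)) :
    (M.neighborSet v).ncard ≤ m := by
  classical
  rw [Set.ncard_eq_toFinset_card']
  have h : (M.neighborSet v).toFinset = M.neighborFinset v := by ext w; simp
  rw [h]
  have := M.degree_lt_card_verts v
  simp only [SimpleGraph.degree] at this ⊢
  simpa using Nat.lt_succ_iff.mp (by simpa using this)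

lemma edge_decomp (n : ℕ) (G : SimpleGraph (Fin (n+1))) :
    G.edgeSet.ncard =
      (G.comap Fin.castSucc).edgeSet.ncard + (G.neighborSet (Fin.last n)).ncard := by
  classical
  have h1 : G.edgeSet =
      (Sym2.map Fin.castSucc '' (G.comap Fin.castSucc).edgeSet) ∪
      ((fun v => s(Fin.last n, v)) '' G.neighborSet (Fin.last n)) := by
    ext e
    induction e using Sym2.ind with
    | _ x y =>
      constructor
      · intro hxy
        rw [SimpleGraph.mem_edgeSet] at hxy
        by_cases hx : x = Fin.last n
        · right; exact ⟨y, by rw [SimpleGraph.mem_neighborSet, ← hx]; exact hxy, by rw [hx]⟩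
        · by_cases hy : y = Fin.last n
          · right
            refine ⟨x, ?_, ?_⟩
            · rw [SimpleGraph.mem_neighborSet, ← hy]; exact hxy.symm
            · rw [hy, Sym2.eq_swap]
          · obtain ⟨x', rfl⟩ := Fin.exists_castSucc_eq.2 hx
            obtain ⟨y', rfl⟩ := Fin.exists_castSucc_eq.2 hy
            left
            exact ⟨s(x', y'), hxy, rfl⟩
      · rintro (⟨e', he', heq⟩ | ⟨v, hv, heq⟩)
        · rw [← heq]
          induction e' using Sym2.ind with
          | _ a b => exact he'
        · rw [← heq]
          exact hv
  have hdisj : Disjoint (Sym2.map Fin.castSucc '' (G.comap Fin.castSucc).edgeSet)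
      ((fun v => s(Fin.last n, v)) '' G.neighborSet (Fin.last n)) := by
    rw [Set.disjoint_left]
    rintro e ⟨e', _, heq⟩ ⟨v, _, heq2⟩
    induction e' using Sym2.ind with
    | _ a b =>
      rw [← heq2] at heq
      simp only [Sym2.map_pair_eq, Sym2.eq_iff] at heq
      rcases heq with ⟨h, -⟩ | ⟨-, h⟩ <;> exact (Fin.castSucc_lt_last _).ne h
  rw [h1, Set.ncard_union_eq hdisj (Set.toFinite _) (Set.toFinite _),
    Set.ncard_image_of_injective _ (Sym2.map.injective (Fin.castSucc_injective n)),
    Set.ncard_image_of_injective _ (fun a b h => Sym2.congr_right.1 h)]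

/-- Deleting the last vertex: `F(G) = F(G') · p^d · (1-p)^(n-d)`. -/
lemma Fdens_delete {p : ℝ} (n : ℕ) (G : SimpleGraph (Fin (n+1))) :
    Fdens p G = Fdens p (G.comap Fin.castSucc) *
      (p ^ (G.neighborSet (Fin.last n)).ncard *
       (1 - p) ^ (n - (G.neighborSet (Fin.last n)).ncard)) := by
  classical
  set e' := (G.comap Fin.castSucc).edgeSet.ncard with he'
  set d := (G.neighborSet (Fin.last n)).ncard with hd
  have hed : G.edgeSet.ncard = e' + d := edge_decomp n G
  have hel : e' ≤ n.choose 2 := edgeSet_ncard_le _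
  have hdl : d ≤ n := neighborSet_ncard_le G _
  have hch : (n+1).choose 2 = n.choose 2 + n := by
    rw [Nat.choose_succ_succ]
    simp [Nat.add_comm]
  have hexp : (n+1).choose 2 - (e' + d) = (n.choose 2 - e') + (n - d) := by omega
  rw [Fdens, Fdens, hed, hexp, pow_add, pow_add]
  ring

/-- The key power inequality, using `p ≤ 1/2`. -/
lemma pow_step_aux {p : ℝ} (hp0 : 0 < p) (hp2 : p ≤ 1/2) (δ D : ℕ) (hδ : δ ≤ D + 1) :
    p ^ δ * (1 - p) ^ (D + 1 - δ) ≤ (1 - p) ^ D := by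
  have hq0 : (0:ℝ) < 1 - p := by linarith
  have hq1 : (1:ℝ) - p ≤ 1 := by linarith
  have hpq : p ≤ 1 - p := by linarith
  cases δ with
  | zero =>
    simp only [pow_zero, one_mul, Nat.sub_zero, pow_succ]
    nlinarith [pow_pos hq0 D]
  | succ δ' =>
    have hδ' : δ' ≤ D := by omega
    have h1 : D + 1 - (δ' + 1) = D - δ' := by omega
    rw [h1]
    have h2 : p ^ (δ' + 1) ≤ (1 - p) ^ δ' := by
      rw [pow_succ]
      calc p ^ δ' * p ≤ (1 - p) ^ δ' * 1 := by
            apply mul_le_mul (pow_le_pow_left₀ hp0.le hpq δ') (by linarith)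
              hp0.le (pow_nonneg hq0.le δ')
        _ = (1 - p) ^ δ' := mul_one _
    calc p ^ (δ' + 1) * (1 - p) ^ (D - δ') ≤ (1 - p) ^ δ' * (1 - p) ^ (D - δ') :=
          mul_le_mul_of_nonneg_right h2 (pow_nonneg hq0.le _)
      _ = (1 - p) ^ D := by rw [← pow_add]; congr 1; omega

lemma pow_step {p : ℝ} (hp0 : 0 < p) (hp2 : p ≤ 1/2) {d₁ d₂ m : ℕ}
    (h21 : d₂ ≤ d₁) (h1 : d₁ ≤ m + 1) (h2 : d₂ ≤ m) :
    p ^ d₁ * (1 - p) ^ (m + 1 - d₁) ≤ p ^ d₂ * (1 - p) ^ (m - d₂) := by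
  have hq0 : (0:ℝ) < 1 - p := by linarith
  obtain ⟨δ, rfl⟩ : ∃ δ, d₁ = d₂ + δ := ⟨d₁ - d₂, by omega⟩
  have hδ : δ ≤ (m - d₂) + 1 := by omega
  have h3 : m + 1 - (d₂ + δ) = (m - d₂) + 1 - δ := by omega
  rw [h3, pow_add, mul_assoc]
  exact mul_le_mul_of_nonneg_left (pow_step_aux hp0 hp2 δ (m - d₂) hδ) (pow_nonneg hp0.le d₂)

/-- The denominator set. -/
lemma denomSet_finite {p : ℝ} {i j : ℕ} (H₁ : SimpleGraph (Fin i)) :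
    {z : ℝ | ∃ H₂ : SimpleGraph (Fin j),
        IsInducedSubgraphOn H₂ H₁ ∧ z = (Fdens p H₂) ^ 2}.Finite := by
  apply Set.Finite.subset (Set.finite_range (fun H₂ : SimpleGraph (Fin j) => (Fdens p H₂) ^ 2))
  rintro z ⟨H₂, -, rfl⟩
  exact ⟨H₂, rfl⟩

lemma denomSet_nonempty {p : ℝ} {i j : ℕ} (h : j ≤ i) (H₁ : SimpleGraph (Fin i)) :
    {z : ℝ | ∃ H₂ : SimpleGraph (Fin j),
        IsInducedSubgraphOn H₂ H₁ ∧ z = (Fdens p H₂) ^ 2}.Nonempty :=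
  ⟨_, H₁.comap (Fin.castLE h),
    isInducedSubgraphOn_comap _ _ (Fin.castLE_injective h), rfl⟩

end Aux

theorem densityIncrement_antitone {k ℓ : ℕ} (hℓ : 3 ≤ ℓ) (hk : ℓ ≤ k)
    (p : ℝ) (hp : p ∈ Set.Ioc (0 : ℝ) (1 / 2)) (H : SimpleGraph (Fin k)) :
    densityIncrement p H ℓ ≤ densityIncrement p H (ℓ - 1) := by
  obtain ⟨hp0, hp2⟩ := hp
  have hp1 : p < 1 := by linarith
  have hq0 : (0:ℝ) < 1 - p := by linarith
  obtain ⟨m, rfl⟩ : ∃ m, ℓ = m + 2 := ⟨ℓ - 2, by omega⟩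
  show densityIncrement p H (m+2) ≤ densityIncrement p H (m+1)
  -- the two sets
  set A : Set ℝ := {y : ℝ | ∃ H₁ : SimpleGraph (Fin (m+2)), IsInducedSubgraphOn H₁ H ∧
    y = (Fdens p H₁) ^ 2 /
      sSup {z : ℝ | ∃ H₂ : SimpleGraph (Fin (m+1)),
        IsInducedSubgraphOn H₂ H₁ ∧ z = (Fdens p H₂) ^ 2}} with hA
  set B : Set ℝ := {y : ℝ | ∃ H₁ : SimpleGraph (Fin (m+1)), IsInducedSubgraphOn H₁ H ∧
    y = (Fdens p H₁) ^ 2 /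
      sSup {z : ℝ | ∃ H₂ : SimpleGraph (Fin m),
        IsInducedSubgraphOn H₂ H₁ ∧ z = (Fdens p H₂) ^ 2}} with hB
  have hgoal : densityIncrement p H (m+2) = sInf A := rfl
  have hgoal2 : densityIncrement p H (m+1) = sInf B := rfl
  rw [hgoal, hgoal2]
  -- B is nonempty
  have hBne : B.Nonempty := by
    refine ⟨_, H.comap (Fin.castLE (by omega : m + 1 ≤ k)),
      isInducedSubgraphOn_comap _ _ (Fin.castLE_injective _), rfl⟩
  -- A is bounded below by 0
  have hAbdd : BddBelow A := by
    refine ⟨0, ?_⟩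
    rintro y ⟨H₁, -, rfl⟩
    apply div_nonneg (sq_nonneg _)
    have hmem := (denomSet_nonempty (p := p) (by omega : m + 1 ≤ m + 2) H₁).csSup_mem
      (denomSet_finite (p := p) H₁)
    obtain ⟨H₂, -, hz⟩ := hmem
    rw [hz]
    exact sq_nonneg _
  apply le_csInf hBne
  rintro b ⟨H₁', hind', rfl⟩
  -- H₁' is an induced subgraph of H on m+1 vertices
  obtain ⟨ψ, hψinj, rfl⟩ := eq_comap_of_isInducedSubgraphOn hind'
  -- find a vertex outside the range of ψ
  have hw : ∃ w : Fin k, w ∉ Set.range ψ := by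
    by_contra hcon
    push_neg at hcon
    have hsurj : Function.Surjective ψ := fun w => hcon w
    have := Fintype.card_le_of_surjective ψ hsurj
    simp only [Fintype.card_fin] at this
    omega
  obtain ⟨w, hwmem⟩ := hw
  -- extend ψ to an injection χ : Fin (m+2) → Fin k
  set χ : Fin (m+2) → Fin k := fun j => Fin.lastCases w (fun i => ψ i) j with hχ
  have hχcast : ∀ i : Fin (m+1), χ (Fin.castSucc i) = ψ i := fun i => by
    simp [hχ]
  have hχlast : χ (Fin.last (m+1)) = w := by simp [hχ]
  have hχinj : Function.Injective χ := by
    intro a b hab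
    induction a using Fin.lastCases with
    | last =>
      induction b using Fin.lastCases with
      | last => rfl
      | cast b' =>
        rw [hχlast, hχcast] at hab
        exact absurd ⟨b', hab.symm⟩ hwmem
    | cast a' =>
      induction b using Fin.lastCases with
      | last =>
        rw [hχlast, hχcast] at hab
        exact absurd ⟨a', hab⟩ hwmem
      | cast b' =>
        rw [hχcast, hχcast] at hab
        rw [hψinj hab]
  -- H₁ := H.comap χ
  set H₁ : SimpleGraph (Fin (m+2)) := H.comap χ with hH₁
  have hH₁mem : IsInducedSubgraphOn H₁ H := isInducedSubgraphOn_comap _ _ hχinj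
  have hdel1 : H₁.comap Fin.castSucc = H.comap ψ := by
    rw [hH₁, SimpleGraph.comap_comap]
    congr 1
    funext i
    exact hχcast i
  -- the denominator of H₁'
  set S' : Set ℝ := {z : ℝ | ∃ H₂ : SimpleGraph (Fin m),
    IsInducedSubgraphOn H₂ (H.comap ψ) ∧ z = (Fdens p H₂) ^ 2} with hS'
  have hS'mem : sSup S' ∈ S' := (denomSet_nonempty (by omega : m ≤ m + 1) _).csSup_mem
    (denomSet_finite _)
  obtain ⟨H₂', hind₂', hS'val⟩ := hS'mem
  obtain ⟨φ, hφinj, rfl⟩ := eq_comap_of_isInducedSubgraphOn hind₂'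
  -- φ⁺ : Fin (m+1) → Fin (m+2)
  set φp : Fin (m+1) → Fin (m+2) :=
    fun j => Fin.lastCases (Fin.last (m+1)) (fun i => Fin.castSucc (φ i)) j with hφp
  have hφpcast : ∀ i : Fin m, φp (Fin.castSucc i) = Fin.castSucc (φ i) := fun i => by
    simp [hφp]
  have hφplast : φp (Fin.last m) = Fin.last (m+1) := by simp [hφp]
  have hφpinj : Function.Injective φp := by
    intro a b hab
    induction a using Fin.lastCases with
    | last =>
      induction b using Fin.lastCases with
      | last => rfl
      | cast b' =>
        rw [hφplast, hφpcast] at hab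
        exact absurd hab.symm (Fin.castSucc_lt_last _).ne
    | cast a' =>
      induction b using Fin.lastCases with
      | last =>
        rw [hφplast, hφpcast] at hab
        exact absurd hab (Fin.castSucc_lt_last _).ne
      | cast b' =>
        rw [hφpcast, hφpcast] at hab
        rw [hφinj (Fin.castSucc_injective _ hab)]
  -- H₂ := H₁.comap φp
  set H₂ : SimpleGraph (Fin (m+1)) := H₁.comap φp with hH₂
  have hcomp : φp ∘ Fin.castSucc = Fin.castSucc ∘ φ := funext fun i => hφpcast i
  have hdel2 : H₂.comap Fin.castSucc = (H.comap ψ).comap φ := by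
    rw [hH₂, SimpleGraph.comap_comap, hcomp, ← SimpleGraph.comap_comap, hdel1]
  -- degrees
  set d₁ := (H₁.neighborSet (Fin.last (m+1))).ncard with hd₁
  set d₂ := (H₂.neighborSet (Fin.last m)).ncard with hd₂
  have hd21 : d₂ ≤ d₁ := by
    rw [hd₁, hd₂]
    rw [← Set.ncard_image_of_injective (H₂.neighborSet (Fin.last m)) hφpinj]
    apply Set.ncard_le_ncard _ (Set.toFinite _)
    rintro v ⟨u, hu, rfl⟩
    rw [SimpleGraph.mem_neighborSet] at hu ⊢
    rw [hH₂, SimpleGraph.comap_adj, hφplast] at hu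
    exact hu
  have hd1le : d₁ ≤ m + 1 := neighborSet_ncard_le _ _
  have hd2le : d₂ ≤ m := neighborSet_ncard_le _ _
  -- Fdens relations
  have hF1 : Fdens p H₁ = Fdens p (H.comap ψ) * (p ^ d₁ * (1-p) ^ (m + 1 - d₁)) := by
    rw [← hdel1]
    exact Fdens_delete (m+1) H₁
  have hF2 : Fdens p H₂ = Fdens p ((H.comap ψ).comap φ) * (p ^ d₂ * (1-p) ^ (m - d₂)) := by
    rw [← hdel2]
    exact Fdens_delete m H₂
  -- positivity
  have hFψ : 0 < Fdens p (H.comap ψ) := Fdens_pos hp0 hp1 _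
  have hFφ : 0 < Fdens p ((H.comap ψ).comap φ) := Fdens_pos hp0 hp1 _
  have hF1pos : 0 < Fdens p H₁ := Fdens_pos hp0 hp1 _
  have hF2pos : 0 < Fdens p H₂ := Fdens_pos hp0 hp1 _
  -- main inequality on ratios: F₁ * F₂' ≤ F₂ * F₁'
  have hkey : Fdens p H₁ * Fdens p ((H.comap ψ).comap φ) ≤
      Fdens p H₂ * Fdens p (H.comap ψ) := by
    rw [hF1, hF2]
    have := pow_step hp0 hp2 hd21 hd1le hd2le
    calc Fdens p (H.comap ψ) * (p ^ d₁ * (1-p) ^ (m + 1 - d₁)) *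
          Fdens p ((H.comap ψ).comap φ)
        = (Fdens p (H.comap ψ) * Fdens p ((H.comap ψ).comap φ)) *
          (p ^ d₁ * (1-p) ^ (m + 1 - d₁)) := by ring
      _ ≤ (Fdens p (H.comap ψ) * Fdens p ((H.comap ψ).comap φ)) *
          (p ^ d₂ * (1-p) ^ (m - d₂)) := by
            apply mul_le_mul_of_nonneg_left this (mul_pos hFψ hFφ).le
      _ = Fdens p ((H.comap ψ).comap φ) * (p ^ d₂ * (1-p) ^ (m - d₂)) *
          Fdens p (H.comap ψ) := by ring
  -- the denominator of H₁
  set S : Set ℝ := {z : ℝ | ∃ H₂ : SimpleGraph (Fin (m+1)),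
    IsInducedSubgraphOn H₂ H₁ ∧ z = (Fdens p H₂) ^ 2} with hS
  have hSup2 : (Fdens p H₂) ^ 2 ≤ sSup S := by
    apply le_csSup (denomSet_finite H₁).bddAbove
    exact ⟨H₂, isInducedSubgraphOn_comap _ _ hφpinj, rfl⟩
  -- a := elem of A
  have haA : (Fdens p H₁) ^ 2 / sSup S ∈ A := ⟨H₁, hH₁mem, rfl⟩
  apply csInf_le_of_le hAbdd haA
  -- final chain
  have hstep1 : (Fdens p H₁) ^ 2 / sSup S ≤ (Fdens p H₁) ^ 2 / (Fdens p H₂) ^ 2 :=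
    div_le_div_of_nonneg_left (sq_nonneg _) (pow_pos hF2pos 2) hSup2
  have hstep2 : (Fdens p H₁) ^ 2 / (Fdens p H₂) ^ 2 ≤
      (Fdens p (H.comap ψ)) ^ 2 / sSup S' := by
    rw [hS'val]
    rw [div_le_div_iff₀ (pow_pos hF2pos 2) (pow_pos hFφ 2)]
    rw [← mul_pow, ← mul_pow]
    apply pow_le_pow_left₀ (mul_pos hF1pos hFφ).le
    calc Fdens p H₁ * Fdens p ((H.comap ψ).comap φ)
        ≤ Fdens p H₂ * Fdens p (H.comap ψ) := hkey
      _ = Fdens p (H.comap ψ) * Fdens p H₂ := mul_comm _ _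
  calc (Fdens p H₁) ^ 2 / sSup S ≤ (Fdens p H₁) ^ 2 / (Fdens p H₂) ^ 2 := hstep1
    _ ≤ (Fdens p (H.comap ψ)) ^ 2 / sSup S' := hstep2
end

section
/- Let p ∈ (0,1/2], let n be an integer with n ≥ 1000/p, and let ℓ be an integer with 2np ≤ ℓ ≤ n/2. Set μ₃ := binom(n,3)·p³. Then: (a) ℙ_{G∼𝒢(n,p)}(|C₃(G) − μ₃| ≤ 0.1·μ₃) ≥ 1 − 1/12; and (b) if S is a uniformly random ℓ-element subset of {1,…,n}, independent of G ∼ 𝒢(n,p), and G' is the graph obtained from G by adding all edges between pairs of distinct vertices of S, then ℙ(C₃(G') ≥ 1.9·μ₃) ≥ 1 − 1/12. -/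
open scoped Classical

/-- `C₃(G)`: the number of triangles of `G`, i.e. of 3-element vertex subsets whose
vertices are pairwise adjacent. -/
noncomputable def triangleCount {n : ℕ} (G : SimpleGraph (Fin n)) : ℕ :=
  Set.ncard {T : Finset (Fin n) | G.IsNClique 3 T}

/-- The graph obtained from `G` by adding all edges between pairs of distinct
vertices of `S`. -/
def addClique {n : ℕ} (G : SimpleGraph (Fin n)) (S : Finset (Fin n)) : SimpleGraph (Fin n) :=
  G ⊔ SimpleGraph.fromRel (fun u v => u ∈ S ∧ v ∈ S)

namespace PlantedAux

open Finset

variable {n : ℕ}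

/-- The universe of potential edges. -/
noncomputable def EU (n : ℕ) : Finset (Sym2 (Fin n)) :=
  Finset.univ.filter (fun e => ¬ e.IsDiag)

lemma mem_EU {e : Sym2 (Fin n)} : e ∈ EU n ↔ ¬ e.IsDiag := by simp [EU]

lemma card_EU : (EU n).card = n.choose 2 := by
  have h := SimpleGraph.card_edgeFinset_top_eq_card_choose_two (V := Fin n)
  rw [SimpleGraph.edgeFinset_top, Fintype.card_fin] at h
  rw [← h]
  congr 1
  ext e
  rw [mem_EU, Set.mem_toFinset]
  rfl

lemma edgeFinset_mem (G : SimpleGraph (Fin n)) : G.edgeFinset ∈ (EU n).powerset := by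
  rw [Finset.mem_powerset]
  intro e he
  rw [mem_EU]
  exact G.not_isDiag_of_mem_edgeSet (SimpleGraph.mem_edgeFinset.mp he)

lemma sum_graph (f : Finset (Sym2 (Fin n)) → ℝ) :
    ∑ G : SimpleGraph (Fin n), f G.edgeFinset = ∑ t ∈ (EU n).powerset, f t := by
  refine Finset.sum_bij' (fun G _ => G.edgeFinset)
    (fun t _ => SimpleGraph.fromEdgeSet (↑t : Set (Sym2 (Fin n)))) ?_ ?_ ?_ ?_ ?_
  · intro G _; exact edgeFinset_mem G
  · intro t _; exact Finset.mem_univ _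
  · intro G _
    show SimpleGraph.fromEdgeSet (↑G.edgeFinset : Set (Sym2 (Fin n))) = G
    rw [SimpleGraph.coe_edgeFinset, SimpleGraph.fromEdgeSet_edgeSet]
  · intro t ht
    have hnd : ∀ e ∈ t, ¬ e.IsDiag := fun e he => mem_EU.mp (Finset.mem_powerset.mp ht he)
    have hes : (SimpleGraph.fromEdgeSet (↑t : Set (Sym2 (Fin n)))).edgeSet = ↑t := by
      rw [SimpleGraph.edgeSet_fromEdgeSet]
      ext e
      simp only [Set.mem_diff, Set.mem_setOf_eq, Finset.mem_coe, and_iff_left_iff_imp]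
      exact fun het => hnd e het
    apply Finset.coe_injective
    simp only [SimpleGraph.coe_edgeFinset]
    exact hes
  · intro G _; rfl

lemma erWeight_eq (p : ℝ) (G : SimpleGraph (Fin n)) :
    erWeight n p G = p ^ G.edgeFinset.card * (1 - p) ^ (n.choose 2 - G.edgeFinset.card) := by
  have h : G.edgeSet.ncard = G.edgeFinset.card := by
    rw [← SimpleGraph.coe_edgeFinset, Set.ncard_coe_finset]
  rw [erWeight, h]

lemma sum_powerset_binom {β : Type*} (s : Finset β) (p q : ℝ) :
    ∑ t ∈ s.powerset, p ^ t.card * q ^ (s.card - t.card) = (p + q) ^ s.card := by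
  calc ∑ t ∈ s.powerset, p ^ t.card * q ^ (s.card - t.card)
      = ∑ t ∈ s.powerset, (∏ _i ∈ t, p) * ∏ _i ∈ s \ t, q := by
        refine Finset.sum_congr rfl fun t ht => ?_
        rw [Finset.prod_const, Finset.prod_const,
          Finset.card_sdiff_of_subset (Finset.mem_powerset.mp ht)]
    _ = ∏ _i ∈ s, (p + q) := (Finset.prod_add _ _ _).symm
    _ = (p + q) ^ s.card := Finset.prod_const _

lemma sum_w_subset (p : ℝ) (F : Finset (Sym2 (Fin n))) (hF : F ⊆ EU n) :
    ∑ t ∈ (EU n).powerset,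
      (if F ⊆ t then p ^ t.card * (1 - p) ^ (n.choose 2 - t.card) else 0) = p ^ F.card := by
  rw [← Finset.sum_filter]
  have hbij : ∑ t ∈ (EU n).powerset.filter (fun t => F ⊆ t),
      p ^ t.card * (1 - p) ^ (n.choose 2 - t.card) =
      ∑ s ∈ (EU n \ F).powerset,
        p ^ (F ∪ s).card * (1 - p) ^ (n.choose 2 - (F ∪ s).card) := by
    refine Finset.sum_bij' (fun t _ => t \ F) (fun s _ => F ∪ s) ?_ ?_ ?_ ?_ ?_
    · intro t ht
      rw [Finset.mem_filter, Finset.mem_powerset] at ht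
      rw [Finset.mem_powerset]
      exact Finset.sdiff_subset_sdiff ht.1 (le_refl F)
    · intro s hs
      rw [Finset.mem_powerset] at hs
      rw [Finset.mem_filter, Finset.mem_powerset]
      exact ⟨Finset.union_subset hF (hs.trans Finset.sdiff_subset), Finset.subset_union_left⟩
    · intro t ht
      rw [Finset.mem_filter] at ht
      exact Finset.union_sdiff_of_subset ht.2
    · intro s hs
      rw [Finset.mem_powerset] at hs
      have hd : Disjoint F s := (Finset.sdiff_disjoint.mono_left (le_refl _)).symm.mono_right hs
      exact Finset.union_sdiff_cancel_left hd
    · intro t ht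
      rw [Finset.mem_filter] at ht
      rw [Finset.union_sdiff_of_subset ht.2]
  rw [hbij]
  have hstep : ∀ s ∈ (EU n \ F).powerset,
      p ^ (F ∪ s).card * (1 - p) ^ (n.choose 2 - (F ∪ s).card) =
      p ^ F.card * (p ^ s.card * (1 - p) ^ ((EU n \ F).card - s.card)) := by
    intro s hs
    rw [Finset.mem_powerset] at hs
    have hd : Disjoint F s := (Finset.sdiff_disjoint.mono_left (le_refl _)).symm.mono_right hs
    have hcu : (F ∪ s).card = F.card + s.card := Finset.card_union_of_disjoint hd
    have hNN : n.choose 2 - (F ∪ s).card = (EU n \ F).card - s.card := by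
      rw [hcu, Finset.card_sdiff_of_subset hF, card_EU, Nat.sub_sub]
    rw [hcu] at hNN
    rw [hcu, hNN, pow_add, mul_assoc]
  rw [Finset.sum_congr rfl hstep, ← Finset.mul_sum, sum_powerset_binom]
  norm_num

lemma cylinder (p : ℝ) (F : Finset (Sym2 (Fin n))) (hF : F ⊆ EU n) :
    ∑ G : SimpleGraph (Fin n),
      erWeight n p G * (if F ⊆ G.edgeFinset then (1 : ℝ) else 0) = p ^ F.card := by
  have h1 : ∀ G : SimpleGraph (Fin n),
      erWeight n p G * (if F ⊆ G.edgeFinset then (1 : ℝ) else 0) =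
      (fun t => if F ⊆ t then p ^ t.card * (1 - p) ^ (n.choose 2 - t.card) else 0)
        G.edgeFinset := by
    intro G
    by_cases h : F ⊆ G.edgeFinset <;> simp [h, erWeight_eq p G]
  have h2 := sum_graph (n := n)
    (fun t => if F ⊆ t then p ^ t.card * (1 - p) ^ (n.choose 2 - t.card) else 0)
  rw [← sum_w_subset p F hF, ← h2]
  exact Finset.sum_congr rfl (fun G _ => h1 G)

/-- The edges of the clique on `T`. -/
noncomputable def triEdges (T : Finset (Fin n)) : Finset (Sym2 (Fin n)) :=
  T.sym2.filter (fun e => ¬ e.IsDiag)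

lemma mem_triEdges {T : Finset (Fin n)} {x y : Fin n} :
    s(x, y) ∈ triEdges T ↔ (x ∈ T ∧ y ∈ T) ∧ x ≠ y := by
  simp [triEdges, Finset.mk_mem_sym2_iff]

lemma triEdges_subset_EU (T : Finset (Fin n)) : triEdges T ⊆ EU n := by
  intro e he
  rw [triEdges, Finset.mem_filter] at he
  exact mem_EU.mpr he.2

lemma triEdges_inter (T T' : Finset (Fin n)) :
    triEdges T ∩ triEdges T' ⊆ triEdges (T ∩ T') := by
  intro e he
  induction e using Sym2.ind with
  | _ x y =>
    rw [Finset.mem_inter, mem_triEdges, mem_triEdges] at he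
    rw [mem_triEdges]
    obtain ⟨⟨⟨hx, hy⟩, hd⟩, ⟨⟨hx', hy'⟩, -⟩⟩ := he
    exact ⟨⟨Finset.mem_inter.mpr ⟨hx, hx'⟩, Finset.mem_inter.mpr ⟨hy, hy'⟩⟩, hd⟩

lemma triEdges_eq_empty {T : Finset (Fin n)} (h : T.card ≤ 1) : triEdges T = ∅ := by
  rw [Finset.eq_empty_iff_forall_notMem]
  intro e he
  induction e using Sym2.ind with
  | _ x y =>
    rw [mem_triEdges] at he
    exact he.2 (Finset.card_le_one.mp h x he.1.1 y he.1.2)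

lemma triEdges_card_le_one {T : Finset (Fin n)} (h : T.card ≤ 2) :
    (triEdges T).card ≤ 1 := by
  rw [Finset.card_le_one]
  intro e he f hf
  induction e using Sym2.ind with
  | _ x y =>
    induction f using Sym2.ind with
    | _ u v =>
      rw [mem_triEdges] at he hf
      obtain ⟨⟨hx, hy⟩, hxy⟩ := he
      obtain ⟨⟨hu, hv⟩, huv⟩ := hf
      have hsub : ({x, y} : Finset (Fin n)) ⊆ T := by
        intro a ha
        rcases Finset.mem_insert.mp ha with rfl | ha
        · exact hx
        · rw [Finset.mem_singleton] at ha; subst ha; exact hy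
      have hT : ({x, y} : Finset (Fin n)) = T :=
        Finset.eq_of_subset_of_card_le hsub (by rw [Finset.card_pair hxy] at *; omega)
    -- now u, v ∈ {x,y}
      rw [← hT] at hu hv
      rcases Finset.mem_insert.mp hu with rfl | hu' <;>
        rcases Finset.mem_insert.mp hv with rfl | hv'
      · exact absurd rfl huv
      · rw [Finset.mem_singleton] at hv'; subst hv'; rfl
      · rw [Finset.mem_singleton] at hu'; subst hu'
        rw [Sym2.eq_swap]
      · rw [Finset.mem_singleton] at hu' hv'; subst hu'; subst hv'
        exact absurd rfl huv

lemma card_triEdges {T : Finset (Fin n)} (hT : T.card = 3) : (triEdges T).card = 3 := by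
  obtain ⟨a, b, c, hab, hac, hbc, rfl⟩ := Finset.card_eq_three.mp hT
  have he : triEdges ({a, b, c} : Finset (Fin n)) = {s(a, b), s(a, c), s(b, c)} := by
    ext e
    induction e using Sym2.ind with
    | _ x y =>
      simp only [mem_triEdges, Finset.mem_insert, Finset.mem_singleton, Sym2.eq_iff]
      constructor
      · rintro ⟨⟨hx | hx | hx, hy | hy | hy⟩, hxy⟩ <;> subst hx <;> subst hy <;> tauto
      · rintro ((⟨rfl, rfl⟩ | ⟨rfl, rfl⟩) |
          ((⟨rfl, rfl⟩ | ⟨rfl, rfl⟩) | (⟨rfl, rfl⟩ | ⟨rfl, rfl⟩))) <;>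
          refine ⟨⟨?_, ?_⟩, ?_⟩ <;> tauto
  rw [he]
  have h1 : s(a, b) ≠ s(a, c) := by simp [Sym2.eq_iff]; tauto
  have h2 : s(a, b) ≠ s(b, c) := by simp [Sym2.eq_iff]; tauto
  have h3 : s(a, c) ≠ s(b, c) := by simp [Sym2.eq_iff]; tauto
  rw [Finset.card_insert_of_notMem (by simp [h1, h2]),
    Finset.card_insert_of_notMem (by simp [h3]), Finset.card_singleton]

lemma isNClique_iff_triEdges {T : Finset (Fin n)} (hT : T.card = 3) (G : SimpleGraph (Fin n)) :
    G.IsNClique 3 T ↔ triEdges T ⊆ G.edgeFinset := by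
  constructor
  · rintro ⟨hclique, -⟩ e he
    induction e using Sym2.ind with
    | _ x y =>
      rw [mem_triEdges] at he
      rw [SimpleGraph.mem_edgeFinset, SimpleGraph.mem_edgeSet]
      exact hclique he.1.1 he.1.2 he.2
  · intro h
    refine ⟨?_, hT⟩
    intro x hx y hy hxy
    have hm : s(x, y) ∈ triEdges T := mem_triEdges.mpr ⟨⟨hx, hy⟩, hxy⟩
    exact (SimpleGraph.mem_edgeSet G).mp (SimpleGraph.mem_edgeFinset.mp (h hm))

lemma triangleCount_eq (G : SimpleGraph (Fin n)) :
    (triangleCount G : ℝ) =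
      ∑ T ∈ Finset.univ.powersetCard 3,
        (if triEdges T ⊆ G.edgeFinset then (1 : ℝ) else 0) := by
  have h1 : {T : Finset (Fin n) | G.IsNClique 3 T} =
      ↑(Finset.univ.filter (fun T => G.IsNClique 3 T)) := by simp
  rw [triangleCount, h1, Set.ncard_coe_finset, Finset.card_filter]
  push_cast
  have h2 : ∑ T ∈ Finset.univ.powersetCard 3,
      (if triEdges T ⊆ G.edgeFinset then (1 : ℝ) else 0) =
      ∑ T ∈ Finset.univ.powersetCard 3, (if G.IsNClique 3 T then (1 : ℝ) else 0) := by
    refine Finset.sum_congr rfl fun T hT => ?_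
    by_cases hc : G.IsNClique 3 T
    · rw [if_pos hc,
        if_pos ((isNClique_iff_triEdges (Finset.mem_powersetCard_univ.mp hT) G).mp hc)]
    · rw [if_neg hc, if_neg
        (fun hh => hc ((isNClique_iff_triEdges (Finset.mem_powersetCard_univ.mp hT) G).mpr hh))]
  rw [h2]
  symm
  apply Finset.sum_subset (Finset.subset_univ _)
  intro T _ hT
  rw [if_neg]
  intro hcl
  exact hT (Finset.mem_powersetCard_univ.mpr hcl.2)

lemma count_inter_two (T : Finset (Fin n)) (hT : T.card = 3) :
    ((Finset.univ.powersetCard 3).filter (fun T' => (T ∩ T').card = 2)).card ≤ 3 * n := by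
  have hinj := Finset.card_le_card_of_injOn
    (f := fun T' => (T ∩ T', T' \ T))
    (t := (T.powersetCard 2) ×ˢ ((Finset.univ : Finset (Fin n)).powersetCard 1))
    (s := (Finset.univ.powersetCard 3).filter (fun T' => (T ∩ T').card = 2)) ?_ ?_
  · refine hinj.trans ?_
    rw [Finset.card_product, Finset.card_powersetCard, Finset.card_powersetCard, hT,
      Finset.card_univ, Fintype.card_fin, Nat.choose_one_right]
    norm_num
  · intro T' hT'
    rw [Finset.mem_coe, Finset.mem_filter, Finset.mem_powersetCard_univ] at hT'
    obtain ⟨hT'3, hT'2⟩ := hT'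
    rw [Finset.mem_coe, Finset.mem_product, Finset.mem_powersetCard, Finset.mem_powersetCard]
    refine ⟨⟨Finset.inter_subset_left, hT'2⟩, Finset.subset_univ _, ?_⟩
    have h := Finset.card_inter_add_card_sdiff T' T
    rw [Finset.inter_comm T' T] at h
    rw [hT'3, hT'2] at h
    show (T' \ T).card = 1
    omega
  · intro T1 h1 T2 h2 heq
    simp only [Prod.mk.injEq] at heq
    have e1 : T1 = T1 \ T ∪ T1 ∩ T := (Finset.sdiff_union_inter T1 T).symm
    have e2 : T2 = T2 \ T ∪ T2 ∩ T := (Finset.sdiff_union_inter T2 T).symm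
    rw [e1, e2, Finset.inter_comm T1 T, Finset.inter_comm T2 T, ← heq.1, ← heq.2]

lemma six_choose_three (m : ℕ) : 6 * m.choose 3 = (m - 2) * ((m - 1) * m) := by
  have h := Nat.descFactorial_eq_factorial_mul_choose m 3
  norm_num [Nat.factorial] at h
  exact h.symm

lemma choose3_lb {m : ℕ} (hm : 2 ≤ m) : ((m : ℝ) - 2) ^ 3 / 6 ≤ (m.choose 3 : ℝ) := by
  have hnat : (m - 2) ^ 3 ≤ 6 * m.choose 3 := by
    rw [six_choose_three]
    calc (m - 2) ^ 3 = (m - 2) * ((m - 2) * (m - 2)) := by ring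
      _ ≤ (m - 2) * ((m - 1) * m) := by
          exact Nat.mul_le_mul_left _ (Nat.mul_le_mul (by omega) (by omega))
  have hc : (((m - 2 : ℕ) : ℝ)) ^ 3 ≤ 6 * (m.choose 3 : ℝ) := by exact_mod_cast hnat
  rw [Nat.cast_sub hm] at hc
  push_cast at hc
  linarith

lemma choose3_ub (m : ℕ) : (m.choose 3 : ℝ) ≤ (m : ℝ) ^ 3 / 6 := by
  have hnat : 6 * m.choose 3 ≤ m ^ 3 := by
    rw [six_choose_three]
    calc (m - 2) * ((m - 1) * m) ≤ m * (m * m) :=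
          Nat.mul_le_mul (by omega) (Nat.mul_le_mul (by omega) le_rfl)
      _ = m ^ 3 := by ring
  have hc : 6 * (m.choose 3 : ℝ) ≤ (m : ℝ) ^ 3 := by exact_mod_cast hnat
  linarith

lemma numeric1 {z p : ℝ} (y : ℝ) (hz : 1000 ≤ z) (hy : 0.999 * z ≤ y) (hp0 : 0 < p)
    (hp2 : p ≤ 1 / 2) : 1200 + 3600 * z * p ≤ y ^ 3 / 6 := by
  have hz0 : (0 : ℝ) < z := by linarith
  have hy0 : (0 : ℝ) ≤ 0.999 * z := by linarith
  have hcube : (0.999 * z) ^ 3 ≤ y ^ 3 := pow_le_pow_left₀ hy0 hy 3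
  have hz2 : z ^ 2 ≥ 1000 ^ 2 := by nlinarith
  have h1 : (0.999 * z) ^ 3 = 0.997002999 * (z ^ 2 * z) := by ring
  nlinarith [mul_le_mul_of_nonneg_right hz2 (le_of_lt hz0)]

lemma numeric2 {z : ℝ} (w : ℝ) (hz : 1000 ≤ z) (hw : 2 * z ≤ w) :
    1.9 * z ^ 3 ≤ (w - 2) ^ 3 := by
  have h1 : (0 : ℝ) ≤ 1.998 * z := by linarith
  have h2 : 1.998 * z ≤ w - 2 := by linarith
  have hcube : (1.998 * z) ^ 3 ≤ (w - 2) ^ 3 := pow_le_pow_left₀ h1 h2 3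
  nlinarith [pow_nonneg (le_trans (by norm_num) hz) 3]

lemma choose_le_triangleCount_addClique (G : SimpleGraph (Fin n)) (S : Finset (Fin n)) :
    (S.card.choose 3 : ℝ) ≤ (triangleCount (addClique G S) : ℝ) := by
  have hsub : (↑(S.powersetCard 3) : Set (Finset (Fin n))) ⊆
      {T : Finset (Fin n) | (addClique G S).IsNClique 3 T} := by
    intro T hT
    rw [Finset.mem_coe, Finset.mem_powersetCard] at hT
    obtain ⟨hTS, hT3⟩ := hT
    refine ⟨?_, hT3⟩
    intro x hx y hy hxy
    rw [addClique, SimpleGraph.sup_adj]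
    right
    rw [SimpleGraph.fromRel_adj]
    exact ⟨hxy, Or.inl ⟨hTS hx, hTS hy⟩⟩
  have hcard : S.card.choose 3 ≤ triangleCount (addClique G S) := by
    calc S.card.choose 3 = (S.powersetCard 3).card := (Finset.card_powersetCard 3 S).symm
      _ = (↑(S.powersetCard 3) : Set (Finset (Fin n))).ncard := (Set.ncard_coe_finset _).symm
      _ ≤ _ := Set.ncard_le_ncard hsub (Set.toFinite _)
  exact_mod_cast hcard

end PlantedAux

set_option maxHeartbeats 1000000 in
open PlantedAux Finset in
theorem triangle_counts_planted_clique {n ℓ : ℕ} (p : ℝ)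
    (hp : p ∈ Set.Ioc (0 : ℝ) (1 / 2)) (hn : 1000 / p ≤ (n : ℝ))
    (hℓlo : 2 * (n : ℝ) * p ≤ (ℓ : ℝ)) (hℓhi : (ℓ : ℝ) ≤ (n : ℝ) / 2) :
    (1 - 1 / 12 : ℝ) ≤ erProb n p (fun G =>
        |(triangleCount G : ℝ) - (n.choose 3 : ℝ) * p ^ 3| ≤
          0.1 * ((n.choose 3 : ℝ) * p ^ 3)) ∧
    (1 - 1 / 12 : ℝ) ≤
      ∑ G : SimpleGraph (Fin n), ∑ S ∈ Finset.univ.powersetCard ℓ,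
        erWeight n p G * (1 / (n.choose ℓ : ℝ)) *
          (if 1.9 * ((n.choose 3 : ℝ) * p ^ 3) ≤ (triangleCount (addClique G S) : ℝ)
            then 1 else 0) := by
  obtain ⟨hp0, hp2⟩ := hp
  have hp1 : p ≤ 1 := hp2.trans (by norm_num)
  have hq0 : (0 : ℝ) ≤ 1 - p := by linarith
  have hW0 : ∀ G : SimpleGraph (Fin n), 0 ≤ erWeight n p G := fun G =>
    mul_nonneg (pow_nonneg hp0.le _) (pow_nonneg hq0 _)
  have hnp : (1000 : ℝ) ≤ (n : ℝ) * p := by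
    have h := mul_le_mul_of_nonneg_right hn hp0.le
    rwa [div_mul_cancel₀ _ (ne_of_gt hp0)] at h
  have hn2000 : (2000 : ℝ) ≤ (n : ℝ) := by
    refine le_trans ?_ hn
    rw [le_div_iff₀ hp0]
    nlinarith
  have hn3 : 3 ≤ n := by
    have h3 : (3 : ℝ) ≤ (n : ℝ) := by linarith
    exact_mod_cast h3
  set μ : ℝ := (n.choose 3 : ℝ) * p ^ 3 with hμ
  have hCnn : ((n : ℝ) - 2) ^ 3 / 6 ≤ (n.choose 3 : ℝ) := choose3_lb (by omega)
  have hμ0 : 0 < μ := by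
    apply mul_pos _ (pow_pos hp0 3)
    have hcp : (0 : ℕ) < n.choose 3 := Nat.choose_pos hn3
    exact_mod_cast hcp
  have hS1 : ∑ G : SimpleGraph (Fin n), erWeight n p G = 1 := by
    have h := cylinder (n := n) p ∅ (Finset.empty_subset _)
    simpa using h
  set 𝒯 : Finset (Finset (Fin n)) := Finset.univ.powersetCard 3 with h𝒯
  have hTcard : ∀ T ∈ 𝒯, T.card = 3 := fun T hT => Finset.mem_powersetCard_univ.mp hT
  have h𝒯card : (𝒯.card : ℝ) = (n.choose 3 : ℝ) := by
    rw [h𝒯, Finset.card_powersetCard, Finset.card_univ, Fintype.card_fin]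
  -- first moment
  have hEX : ∑ G : SimpleGraph (Fin n), erWeight n p G * (triangleCount G : ℝ) = μ := by
    calc ∑ G : SimpleGraph (Fin n), erWeight n p G * (triangleCount G : ℝ)
        = ∑ G : SimpleGraph (Fin n), ∑ T ∈ 𝒯,
            erWeight n p G * (if triEdges T ⊆ G.edgeFinset then (1 : ℝ) else 0) :=
          Finset.sum_congr rfl fun G _ => by rw [triangleCount_eq, Finset.mul_sum, h𝒯]
      _ = ∑ T ∈ 𝒯, ∑ G : SimpleGraph (Fin n),
            erWeight n p G * (if triEdges T ⊆ G.edgeFinset then (1 : ℝ) else 0) :=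
          Finset.sum_comm
      _ = ∑ T ∈ 𝒯, p ^ 3 := Finset.sum_congr rfl fun T hT => by
          rw [cylinder p _ (triEdges_subset_EU T), card_triEdges (hTcard T hT)]
      _ = μ := by rw [Finset.sum_const, nsmul_eq_mul, h𝒯card]
  -- pair expectation
  have hpair : ∀ T ∈ 𝒯, ∀ T' ∈ 𝒯,
      (∑ G : SimpleGraph (Fin n), erWeight n p G *
        ((if triEdges T ⊆ G.edgeFinset then (1 : ℝ) else 0) *
          (if triEdges T' ⊆ G.edgeFinset then (1 : ℝ) else 0))) =
      p ^ ((triEdges T ∪ triEdges T').card) := by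
    intro T _ T' _
    have hind : ∀ G : SimpleGraph (Fin n),
        (if triEdges T ⊆ G.edgeFinset then (1 : ℝ) else 0) *
          (if triEdges T' ⊆ G.edgeFinset then (1 : ℝ) else 0) =
        (if triEdges T ∪ triEdges T' ⊆ G.edgeFinset then (1 : ℝ) else 0) := by
      intro G
      by_cases hA : triEdges T ⊆ G.edgeFinset <;> by_cases hB : triEdges T' ⊆ G.edgeFinset
      · rw [if_pos hA, if_pos hB, if_pos (Finset.union_subset hA hB), one_mul]
      · rw [if_pos hA, if_neg hB,
          if_neg (fun h => hB (Finset.union_subset_iff.mp h).2), one_mul]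
      · rw [if_neg hA, if_pos hB,
          if_neg (fun h => hA (Finset.union_subset_iff.mp h).1), zero_mul]
      · rw [if_neg hA, if_neg hB,
          if_neg (fun h => hA (Finset.union_subset_iff.mp h).1), zero_mul]
    calc (∑ G : SimpleGraph (Fin n), erWeight n p G *
          ((if triEdges T ⊆ G.edgeFinset then (1 : ℝ) else 0) *
            (if triEdges T' ⊆ G.edgeFinset then (1 : ℝ) else 0)))
        = ∑ G : SimpleGraph (Fin n), erWeight n p G *
            (if triEdges T ∪ triEdges T' ⊆ G.edgeFinset then (1 : ℝ) else 0) :=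
          Finset.sum_congr rfl fun G _ => by rw [hind G]
      _ = p ^ ((triEdges T ∪ triEdges T').card) :=
          cylinder p _ (Finset.union_subset (triEdges_subset_EU T) (triEdges_subset_EU T'))
  -- pointwise bound on pair terms
  have hptw : ∀ T ∈ 𝒯, ∀ T' ∈ 𝒯, p ^ ((triEdges T ∪ triEdges T').card) ≤
      (if T = T' then p ^ 3 else 0) + ((if (T ∩ T').card = 2 then p ^ 5 else 0) + p ^ 6) := by
    intro T hT T' hT'
    by_cases he : T = T'
    · subst he
      rw [if_pos rfl, Finset.union_self, card_triEdges (hTcard T hT)]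
      have h5 : (0 : ℝ) ≤ (if (T ∩ T).card = 2 then p ^ 5 else 0) := by
        split_ifs
        · exact pow_nonneg hp0.le 5
        · exact le_rfl
      have h6 : (0 : ℝ) ≤ p ^ 6 := pow_nonneg hp0.le 6
      linarith
    · rw [if_neg he]
      by_cases h2 : (T ∩ T').card = 2
      · rw [if_pos h2]
        have h5le : 5 ≤ (triEdges T ∪ triEdges T').card := by
          have hsum := Finset.card_union_add_card_inter (triEdges T) (triEdges T')
          have hint : (triEdges T ∩ triEdges T').card ≤ 1 :=
            le_trans (Finset.card_le_card (triEdges_inter T T'))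
              (triEdges_card_le_one (le_of_eq h2))
          rw [card_triEdges (hTcard T hT), card_triEdges (hTcard T' hT')] at hsum
          omega
        have hle := pow_le_pow_of_le_one hp0.le hp1 h5le
        have h6 : (0 : ℝ) ≤ p ^ 6 := pow_nonneg hp0.le 6
        linarith
      · rw [if_neg h2]
        have hle1 : (T ∩ T').card ≤ 1 := by
          have h3 : (T ∩ T').card ≤ 3 := by
            rw [← hTcard T hT]
            exact Finset.card_le_card Finset.inter_subset_left
          rcases Nat.lt_or_ge (T ∩ T').card 2 with h | h
          · omega
          · exfalso
            have hc3 : (T ∩ T').card = 3 := by omega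
            have hTT : T ∩ T' = T := Finset.eq_of_subset_of_card_le
              Finset.inter_subset_left (by rw [hTcard T hT, hc3])
            have hsub : T ⊆ T' := by
              rw [← hTT]
              exact Finset.inter_subset_right
            exact he (Finset.eq_of_subset_of_card_le hsub
              (by rw [hTcard T hT, hTcard T' hT']))
        have hdisj : triEdges T ∩ triEdges T' = ∅ := by
          have hsub := triEdges_inter T T'
          rw [triEdges_eq_empty hle1] at hsub
          exact Finset.subset_empty.mp hsub
        have h6 : (triEdges T ∪ triEdges T').card = 6 := by
          have hsum := Finset.card_union_add_card_inter (triEdges T) (triEdges T')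
          rw [hdisj, card_triEdges (hTcard T hT), card_triEdges (hTcard T' hT'),
            Finset.card_empty] at hsum
          omega
        rw [h6]
        linarith
  -- second moment
  have hEX2 : ∑ G : SimpleGraph (Fin n), erWeight n p G * (triangleCount G : ℝ) ^ 2 ≤
      μ ^ 2 + (μ + 3 * (n : ℝ) * (n.choose 3 : ℝ) * p ^ 5) := by
    have h1 : ∀ G : SimpleGraph (Fin n), erWeight n p G * (triangleCount G : ℝ) ^ 2 =
        ∑ T ∈ 𝒯, ∑ T' ∈ 𝒯, erWeight n p G *
          ((if triEdges T ⊆ G.edgeFinset then (1 : ℝ) else 0) *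
            (if triEdges T' ⊆ G.edgeFinset then (1 : ℝ) else 0)) := by
      intro G
      rw [triangleCount_eq, sq, Finset.sum_mul_sum, Finset.mul_sum, h𝒯]
      refine Finset.sum_congr rfl fun T _ => ?_
      rw [Finset.mul_sum]
    have hperT : ∀ T ∈ 𝒯,
        (∑ T' ∈ 𝒯, ((if T = T' then p ^ 3 else 0) +
          ((if (T ∩ T').card = 2 then p ^ 5 else 0) + p ^ 6))) ≤
        p ^ 3 + (3 * (n : ℝ) * p ^ 5 + (n.choose 3 : ℝ) * p ^ 6) := by
      intro T hT
      rw [Finset.sum_add_distrib, Finset.sum_add_distrib]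
      have e1 : (∑ T' ∈ 𝒯, if T = T' then p ^ 3 else 0) = p ^ 3 := by
        rw [Finset.sum_ite_eq 𝒯 T (fun _ => p ^ 3), if_pos hT]
      have e2 : (∑ T' ∈ 𝒯, if (T ∩ T').card = 2 then p ^ 5 else 0) ≤
          3 * (n : ℝ) * p ^ 5 := by
        rw [← Finset.sum_filter]
        rw [Finset.sum_const, nsmul_eq_mul]
        have hcount := count_inter_two T (hTcard T hT)
        rw [h𝒯]
        calc ((Finset.filter (fun T' => (T ∩ T').card = 2)
              (Finset.univ.powersetCard 3)).card : ℝ) * p ^ 5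
            ≤ ((3 * n : ℕ) : ℝ) * p ^ 5 := by
              apply mul_le_mul_of_nonneg_right _ (pow_nonneg hp0.le 5)
              exact_mod_cast hcount
          _ = 3 * (n : ℝ) * p ^ 5 := by push_cast; ring
      have e3 : (∑ _T' ∈ 𝒯, p ^ 6) = (n.choose 3 : ℝ) * p ^ 6 := by
        rw [Finset.sum_const, nsmul_eq_mul, h𝒯card]
      rw [e1, e3]
      linarith
    calc ∑ G : SimpleGraph (Fin n), erWeight n p G * (triangleCount G : ℝ) ^ 2
        = ∑ G : SimpleGraph (Fin n), ∑ T ∈ 𝒯, ∑ T' ∈ 𝒯, erWeight n p G *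
            ((if triEdges T ⊆ G.edgeFinset then (1 : ℝ) else 0) *
              (if triEdges T' ⊆ G.edgeFinset then (1 : ℝ) else 0)) :=
          Finset.sum_congr rfl fun G _ => h1 G
      _ = ∑ T ∈ 𝒯, ∑ G : SimpleGraph (Fin n), ∑ T' ∈ 𝒯, erWeight n p G *
            ((if triEdges T ⊆ G.edgeFinset then (1 : ℝ) else 0) *
              (if triEdges T' ⊆ G.edgeFinset then (1 : ℝ) else 0)) := Finset.sum_comm
      _ = ∑ T ∈ 𝒯, ∑ T' ∈ 𝒯, ∑ G : SimpleGraph (Fin n), erWeight n p G *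
            ((if triEdges T ⊆ G.edgeFinset then (1 : ℝ) else 0) *
              (if triEdges T' ⊆ G.edgeFinset then (1 : ℝ) else 0)) :=
          Finset.sum_congr rfl fun T _ => Finset.sum_comm
      _ = ∑ T ∈ 𝒯, ∑ T' ∈ 𝒯, p ^ ((triEdges T ∪ triEdges T').card) :=
          Finset.sum_congr rfl fun T hT => Finset.sum_congr rfl fun T' hT' =>
            hpair T hT T' hT'
      _ ≤ ∑ T ∈ 𝒯, ∑ T' ∈ 𝒯, ((if T = T' then p ^ 3 else 0) +
            ((if (T ∩ T').card = 2 then p ^ 5 else 0) + p ^ 6)) :=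
          Finset.sum_le_sum fun T hT => Finset.sum_le_sum fun T' hT' => hptw T hT T' hT'
      _ ≤ ∑ _T ∈ 𝒯, (p ^ 3 + (3 * (n : ℝ) * p ^ 5 + (n.choose 3 : ℝ) * p ^ 6)) :=
          Finset.sum_le_sum hperT
      _ = μ ^ 2 + (μ + 3 * (n : ℝ) * (n.choose 3 : ℝ) * p ^ 5) := by
          rw [Finset.sum_const, nsmul_eq_mul, h𝒯card, hμ]
          ring
  -- variance bound
  have hvar : ∑ G : SimpleGraph (Fin n),
      erWeight n p G * ((triangleCount G : ℝ) - μ) ^ 2 ≤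
      μ + 3 * (n : ℝ) * (n.choose 3 : ℝ) * p ^ 5 := by
    have hexp : ∀ G : SimpleGraph (Fin n),
        erWeight n p G * ((triangleCount G : ℝ) - μ) ^ 2 =
        erWeight n p G * (triangleCount G : ℝ) ^ 2 -
          2 * μ * (erWeight n p G * (triangleCount G : ℝ)) +
          μ ^ 2 * erWeight n p G := fun G => by ring
    calc ∑ G : SimpleGraph (Fin n), erWeight n p G * ((triangleCount G : ℝ) - μ) ^ 2
        = (∑ G : SimpleGraph (Fin n), erWeight n p G * (triangleCount G : ℝ) ^ 2) -
            2 * μ * (∑ G : SimpleGraph (Fin n), erWeight n p G * (triangleCount G : ℝ)) +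
            μ ^ 2 * (∑ G : SimpleGraph (Fin n), erWeight n p G) := by
          rw [Finset.mul_sum, Finset.mul_sum, ← Finset.sum_sub_distrib,
            ← Finset.sum_add_distrib]
          exact Finset.sum_congr rfl fun G _ => hexp G
      _ = (∑ G : SimpleGraph (Fin n), erWeight n p G * (triangleCount G : ℝ) ^ 2) -
            2 * μ * μ + μ ^ 2 * 1 := by rw [hEX, hS1]
      _ ≤ μ + 3 * (n : ℝ) * (n.choose 3 : ℝ) * p ^ 5 := by nlinarith [hEX2]
  -- numeric bound
  have hy : 0.999 * ((n : ℝ) * p) ≤ ((n : ℝ) - 2) * p := by nlinarith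
  have hnum := numeric1 (((n : ℝ) - 2) * p) hnp hy hp0 hp2
  have h2 : (((n : ℝ) - 2) * p) ^ 3 / 6 ≤ μ := by
    rw [hμ]
    have hmul := mul_le_mul_of_nonneg_right hCnn (pow_nonneg hp0.le 3)
    calc (((n : ℝ) - 2) * p) ^ 3 / 6 = (((n : ℝ) - 2) ^ 3 / 6) * p ^ 3 := by ring
      _ ≤ _ := hmul
  have hlin : 1200 + 3600 * (n : ℝ) * p ^ 2 ≤ μ := by nlinarith [hnum, h2]
  have hfinal : 12 * (μ + 3 * (n : ℝ) * (n.choose 3 : ℝ) * p ^ 5) ≤ 0.01 * μ ^ 2 := by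
    have e1 : 12 * (μ + 3 * (n : ℝ) * (n.choose 3 : ℝ) * p ^ 5) =
        μ * 12 + μ * (36 * (n : ℝ) * p ^ 2) := by rw [hμ]; ring
    have e2 : μ * 12 + μ * (36 * (n : ℝ) * p ^ 2) = μ * (12 + 36 * (n : ℝ) * p ^ 2) := by ring
    rw [e1, e2]
    calc μ * (12 + 36 * (n : ℝ) * p ^ 2) ≤ μ * (0.01 * μ) := by
          apply mul_le_mul_of_nonneg_left _ hμ0.le
          linarith
      _ = 0.01 * μ ^ 2 := by ring
  -- Chebyshev
  have hsplit : erProb n p (fun G => |(triangleCount G : ℝ) - μ| ≤ 0.1 * μ) +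
      (∑ G : SimpleGraph (Fin n),
        if ¬ (|(triangleCount G : ℝ) - μ| ≤ 0.1 * μ) then erWeight n p G else 0) = 1 := by
    rw [erProb, ← Finset.sum_add_distrib, ← hS1]
    refine Finset.sum_congr rfl fun G _ => ?_
    by_cases h : |(triangleCount G : ℝ) - μ| ≤ 0.1 * μ <;> simp [h]
  have hbadub : (∑ G : SimpleGraph (Fin n),
      if ¬ (|(triangleCount G : ℝ) - μ| ≤ 0.1 * μ) then erWeight n p G else 0) *
      (0.01 * μ ^ 2) ≤ μ + 3 * (n : ℝ) * (n.choose 3 : ℝ) * p ^ 5 := by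
    rw [Finset.sum_mul]
    refine le_trans (Finset.sum_le_sum fun G _ => ?_) hvar
    by_cases hA : |(triangleCount G : ℝ) - μ| ≤ 0.1 * μ
    · rw [if_neg (by exact fun h => h hA)]
      rw [zero_mul]
      exact mul_nonneg (hW0 G) (sq_nonneg _)
    · rw [if_pos hA]
      apply mul_le_mul_of_nonneg_left _ (hW0 G)
      have h1 : 0.1 * μ < |(triangleCount G : ℝ) - μ| := lt_of_not_ge hA
      have h2 : (0.1 * μ) ^ 2 ≤ |(triangleCount G : ℝ) - μ| ^ 2 :=
        pow_le_pow_left₀ (by linarith) h1.le 2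
      rw [sq_abs] at h2
      calc 0.01 * μ ^ 2 = (0.1 * μ) ^ 2 := by ring
        _ ≤ _ := h2
  have hc0 : (0 : ℝ) < 0.01 * μ ^ 2 := by positivity
  have hbadle : (∑ G : SimpleGraph (Fin n),
      if ¬ (|(triangleCount G : ℝ) - μ| ≤ 0.1 * μ) then erWeight n p G else 0) ≤ 1 / 12 := by
    have hb : (∑ G : SimpleGraph (Fin n),
        if ¬ (|(triangleCount G : ℝ) - μ| ≤ 0.1 * μ) then erWeight n p G else 0) *
        (0.01 * μ ^ 2) ≤ (1 / 12) * (0.01 * μ ^ 2) := by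
      calc _ ≤ μ + 3 * (n : ℝ) * (n.choose 3 : ℝ) * p ^ 5 := hbadub
        _ ≤ (1 / 12) * (0.01 * μ ^ 2) := by linarith
    exact le_of_mul_le_mul_right hb hc0
  constructor
  · linarith [hsplit, hbadle]
  · -- part (b)
    have hl2000 : (2000 : ℝ) ≤ (ℓ : ℝ) := by linarith [hnp, hℓlo]
    have hln : ℓ ≤ n := by
      have hr : (ℓ : ℝ) ≤ (n : ℝ) := by linarith
      exact_mod_cast hr
    have hkey : ∀ (G : SimpleGraph (Fin n)), ∀ S ∈ Finset.univ.powersetCard ℓ,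
        1.9 * μ ≤ (triangleCount (addClique G S) : ℝ) := by
      intro G S hS
      have hScard : S.card = ℓ := Finset.mem_powersetCard_univ.mp hS
      have h1 : (ℓ.choose 3 : ℝ) ≤ (triangleCount (addClique G S) : ℝ) := by
        have hc := choose_le_triangleCount_addClique G S
        rwa [hScard] at hc
      refine le_trans ?_ h1
      have hub : (n.choose 3 : ℝ) ≤ (n : ℝ) ^ 3 / 6 := choose3_ub n
      have hlb : ((ℓ : ℝ) - 2) ^ 3 / 6 ≤ (ℓ.choose 3 : ℝ) := choose3_lb (by
        have h2l : (2 : ℝ) ≤ (ℓ : ℝ) := by linarith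
        exact_mod_cast h2l)
      have hnum2 := numeric2 (ℓ : ℝ) hnp (by linarith)
      rw [hμ]
      calc 1.9 * ((n.choose 3 : ℝ) * p ^ 3) ≤ 1.9 * (((n : ℝ) ^ 3 / 6) * p ^ 3) := by
            apply mul_le_mul_of_nonneg_left _ (by norm_num)
            exact mul_le_mul_of_nonneg_right hub (pow_nonneg hp0.le 3)
        _ = (1.9 * ((n : ℝ) * p) ^ 3) / 6 := by ring
        _ ≤ ((ℓ : ℝ) - 2) ^ 3 / 6 := by linarith
        _ ≤ (ℓ.choose 3 : ℝ) := hlb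
    have hChoose0 : (n.choose ℓ : ℝ) ≠ 0 := by
      have hpos : 0 < n.choose ℓ := Nat.choose_pos hln
      exact_mod_cast hpos.ne'
    have hsum : (∑ G : SimpleGraph (Fin n), ∑ S ∈ Finset.univ.powersetCard ℓ,
        erWeight n p G * (1 / (n.choose ℓ : ℝ)) *
          (if 1.9 * μ ≤ (triangleCount (addClique G S) : ℝ) then (1 : ℝ) else 0)) = 1 := by
      calc (∑ G : SimpleGraph (Fin n), ∑ S ∈ Finset.univ.powersetCard ℓ,
          erWeight n p G * (1 / (n.choose ℓ : ℝ)) *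
            (if 1.9 * μ ≤ (triangleCount (addClique G S) : ℝ) then (1 : ℝ) else 0))
          = ∑ G : SimpleGraph (Fin n), ∑ _S ∈ Finset.univ.powersetCard ℓ,
              erWeight n p G * (1 / (n.choose ℓ : ℝ)) :=
            Finset.sum_congr rfl fun G _ => Finset.sum_congr rfl fun S hS => by
              rw [if_pos (hkey G S hS), mul_one]
        _ = ∑ G : SimpleGraph (Fin n),
              ((n.choose ℓ : ℝ)) * (erWeight n p G * (1 / (n.choose ℓ : ℝ))) :=
            Finset.sum_congr rfl fun G _ => by
              rw [Finset.sum_const, Finset.card_powersetCard, Finset.card_univ,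
                Fintype.card_fin, nsmul_eq_mul]
        _ = ∑ G : SimpleGraph (Fin n), erWeight n p G :=
            Finset.sum_congr rfl fun G _ => by field_simp
        _ = 1 := hS1
    rw [hsum]
    norm_num
end
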